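/- arXiv:1902.03719 — 9 statements merged into one kernel-verified Lean document; each statement's English description precedes it below -/
import Mathlib

section
/- Let f be a homogeneous quadratic polynomial in n variables with all coefficients positive, with Hessian H. If there exists a nonzero vector u with nonnegative entries such that (uᵀHv)² > (uᵀHu)(vᵀHv) for every v ∈ ℝⁿ not parallel to u, then H is nonsingular and has exactly one positive eigenvalue. -/
open MvPolynomial Matrix

noncomputable def polyHessian {n : ℕ} (f : MvPolynomial (Fin n) ℝ) (w : Fin n → ℝ) :
    Matrix (Fin n) (Fin n) ℝ :=
  Matrix.of fun i j => eval w (pderiv i (pderiv j f))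

def ExactlyOnePosEig {n : ℕ} (A : Matrix (Fin n) (Fin n) ℝ) : Prop :=
  ∃ hA : A.IsHermitian, (Finset.univ.filter fun i => 0 < hA.eigenvalues i).card = 1

def AtMostOnePosEig {n : ℕ} (A : Matrix (Fin n) (Fin n) ℝ) : Prop :=
  ∃ hA : A.IsHermitian, (Finset.univ.filter fun i => 0 < hA.eigenvalues i).card ≤ 1

def MConvexSet {n : ℕ} (J : Set (Fin n →₀ ℕ)) : Prop :=
  ∀ α ∈ J, ∀ β ∈ J, ∀ i : Fin n, β i < α i →
    ∃ j : Fin n, α j < β j ∧ α - Finsupp.single i 1 + Finsupp.single j 1 ∈ J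

def LorBase {n : ℕ} (d : ℕ) (f : MvPolynomial (Fin n) ℝ) : Prop :=
  f.IsHomogeneous d ∧ (∀ α, 0 ≤ f.coeff α) ∧ MConvexSet {α | f.coeff α ≠ 0}

def IsLorentzian {n : ℕ} : ℕ → MvPolynomial (Fin n) ℝ → Prop
  | 0, f => LorBase 0 f
  | 1, f => LorBase 1 f
  | 2, f => LorBase 2 f ∧ AtMostOnePosEig (polyHessian f 0)
  | d + 3, f => LorBase (d + 3) f ∧ ∀ i, IsLorentzian (d + 2) (pderiv i f)

lemma coeff_pderiv' {n : ℕ} (i : Fin n) (p : MvPolynomial (Fin n) ℝ) (m : Fin n →₀ ℕ) :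
    coeff m (pderiv i p) = ((m i : ℝ) + 1) * coeff (m + Finsupp.single i 1) p := by
  induction p using MvPolynomial.induction_on' with
  | add p q hp hq => simp [hp, hq, mul_add]
  | monomial s a =>
    rw [pderiv_monomial, coeff_monomial, coeff_monomial]
    by_cases h : s = m + Finsupp.single i 1
    · subst h
      have h1 : m + Finsupp.single i 1 - Finsupp.single i 1 = m := by
        ext k; simp [Finsupp.single_apply]
      have h2 : ((m + Finsupp.single i 1 : Fin n →₀ ℕ)) i = m i + 1 := by
        rw [Finsupp.add_apply, Finsupp.single_eq_same]
      rw [if_pos h1, h2]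
      simp only [if_true]; push_cast; ring
    · rw [if_neg h]
      by_cases h3 : s - Finsupp.single i 1 = m
      · have h4 : s i = 0 := by
          by_contra h4
          apply h
          rw [← h3]
          ext k
          rcases eq_or_ne k i with rfl | hk
          · simp [Nat.sub_add_cancel (Nat.one_le_iff_ne_zero.mpr h4)]
          · simp [Finsupp.single_apply, hk.symm, Ne.symm hk]
        rw [if_pos h3, h4]
        simp
      · rw [if_neg h3, mul_zero]

lemma hessian_entry {n : ℕ} (f : MvPolynomial (Fin n) ℝ) (i j : Fin n) :
    (polyHessian f 0) i j
      = (((Finsupp.single i 1 : Fin n →₀ ℕ) j : ℝ) + 1)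
          * coeff (Finsupp.single i 1 + Finsupp.single j 1) f := by
  show eval 0 (pderiv i (pderiv j f)) = _
  have h0 : eval (0 : Fin n → ℝ) (pderiv i (pderiv j f)) = coeff 0 (pderiv i (pderiv j f)) := by
    simp [eval_zero]; rfl
  rw [h0, coeff_pderiv', coeff_pderiv']
  simp

theorem stmt0 {n : ℕ} (f : MvPolynomial (Fin n) ℝ)
    (hf : f.IsHomogeneous 2)
    (hpos : ∀ α : Fin n →₀ ℕ, (α.sum fun _ k => k) = 2 → 0 < f.coeff α)
    (H : Matrix (Fin n) (Fin n) ℝ) (hH : H = polyHessian f 0)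
    (u : Fin n → ℝ) (hu0 : u ≠ 0) (hu : ∀ i, 0 ≤ u i)
    (huv : ∀ v : Fin n → ℝ, (¬ ∃ t : ℝ, v = t • u) →
      (u ⬝ᵥ H.mulVec v) ^ 2 > (u ⬝ᵥ H.mulVec u) * (v ⬝ᵥ H.mulVec v)) :
    H.det ≠ 0 ∧ ExactlyOnePosEig H := by
  -- entries of H are positive
  have hent : ∀ i j, 0 < H i j := by
    intro i j
    rw [hH, hessian_entry]
    have hsum : ((Finsupp.single i 1 + Finsupp.single j 1 : Fin n →₀ ℕ).sum fun _ k => k) = 2 := by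
      rw [Finsupp.sum_add_index' (by intro; rfl) (by intros; rfl)]
      simp [Finsupp.sum_single_index]
    have := hpos _ hsum
    positivity
  -- H is symmetric / Hermitian
  have hsymm : ∀ i j, H i j = H j i := by
    intro i j
    rw [hH, hessian_entry, hessian_entry]
    rcases eq_or_ne i j with rfl | hij
    · rfl
    · rw [add_comm (Finsupp.single i 1)]
      simp [Finsupp.single_apply, hij, Ne.symm hij]
  have hA : H.IsHermitian := by
    ext i j
    simp only [conjTranspose_apply, star_trivial]
    exact hsymm j i
  -- u has a positive entry
  obtain ⟨k, hk⟩ : ∃ k, u k ≠ 0 := Function.ne_iff.mp hu0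
  have hk' : 0 < u k := lt_of_le_of_ne (hu k) (Ne.symm hk)
  -- Q(u) > 0
  have hQu : 0 < u ⬝ᵥ H *ᵥ u := by
    unfold dotProduct mulVec dotProduct
    apply Finset.sum_pos'
    · intro i _
      exact mul_nonneg (hu i) (Finset.sum_nonneg fun j _ =>
        mul_nonneg (hent i j).le (hu j))
    · refine ⟨k, Finset.mem_univ k, mul_pos hk' (Finset.sum_pos' ?_ ⟨k, Finset.mem_univ k, mul_pos (hent k k) hk'⟩)⟩
      intro j _
      exact mul_nonneg (hent k j).le (hu j)
  -- key lemma
  have key : ∀ v : Fin n → ℝ, v ≠ 0 → u ⬝ᵥ H *ᵥ v = 0 → 0 ≤ v ⬝ᵥ H *ᵥ v → False := by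
    intro v hv hBv hQv
    have hnp : ¬ ∃ t : ℝ, v = t • u := by
      rintro ⟨t, rfl⟩
      have : u ⬝ᵥ H *ᵥ (t • u) = t * (u ⬝ᵥ H *ᵥ u) := by
        rw [mulVec_smul, dotProduct_smul]; rfl
      rw [this] at hBv
      have ht : t = 0 := by
        rcases mul_eq_zero.mp hBv with h | h
        · exact h
        · exact absurd h hQu.ne'
      exact hv (by rw [ht, zero_smul])
    have := huv v hnp
    rw [hBv] at this
    nlinarith
  -- determinant nonzero
  have hdet : H.det ≠ 0 := by
    intro hd
    obtain ⟨v, hv, hMv⟩ := (Matrix.exists_mulVec_eq_zero_iff).mpr hd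
    exact key v hv (by rw [hMv, dotProduct_zero]) (by rw [hMv, dotProduct_zero])
  refine ⟨hdet, hA, ?_⟩
  -- dot products of eigenvectors
  set b := hA.eigenvectorBasis with hb
  have hbb : ∀ k l, (⇑(b k) : Fin n → ℝ) ⬝ᵥ ⇑(b l) = if k = l then 1 else 0 := by
    intro k l
    have h := (orthonormal_iff_ite (𝕜 := ℝ)).mp hA.eigenvectorBasis.orthonormal k l
    simpa [PiLp.inner_apply, dotProduct, RCLike.inner_apply, mul_comm] using h
  have hmv : ∀ k, H *ᵥ ⇑(b k) = hA.eigenvalues k • ⇑(b k) := fun k =>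
    hA.mulVec_eigenvectorBasis k
  -- at least one positive eigenvalue
  have hexists : ∃ i, 0 < hA.eigenvalues i := by
    by_contra hno
    push_neg at hno
    have hst := hA.spectral_theorem
    set U : Matrix (Fin n) (Fin n) ℝ := (hA.eigenvectorUnitary : Matrix (Fin n) (Fin n) ℝ) with hU
    set c : Fin n → ℝ := star U *ᵥ u with hc
    have hQ : u ⬝ᵥ H *ᵥ u = ∑ i, hA.eigenvalues i * (c i) ^ 2 := by
      conv_lhs => rw [hst, Unitary.conjStarAlgAut_apply]
      rw [← mulVec_mulVec, ← mulVec_mulVec, dotProduct_mulVec]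
      have hvm : vecMul u U = c := by
        rw [hc]
        ext j
        simp [vecMul, mulVec, dotProduct, conjTranspose_apply, mul_comm]
      rw [hvm]
      have hdmv : diagonal (RCLike.ofReal ∘ hA.eigenvalues) *ᵥ c = fun i => hA.eigenvalues i * c i := by
        ext i; simp [mulVec_diagonal]
      rw [hdmv]
      unfold dotProduct
      exact Finset.sum_congr rfl (fun i _ => by ring)
    have : u ⬝ᵥ H *ᵥ u ≤ 0 := by
      rw [hQ]
      apply Finset.sum_nonpos
      intro i _
      exact mul_nonpos_of_nonpos_of_nonneg (hno i) (sq_nonneg _)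
    linarith
  -- at most one positive eigenvalue
  have hle : (Finset.univ.filter fun i => 0 < hA.eigenvalues i).card ≤ 1 := by
    apply Finset.card_le_one.mpr
    intro i hi j hj
    simp only [Finset.mem_filter] at hi hj
    by_contra hij
    set li := hA.eigenvalues i
    set lj := hA.eigenvalues j
    set a : ℝ := u ⬝ᵥ H *ᵥ ⇑(b i) with ha
    set c : ℝ := u ⬝ᵥ H *ᵥ ⇑(b j) with hcdef
    have hQbi : (⇑(b i) : Fin n → ℝ) ⬝ᵥ H *ᵥ ⇑(b i) = li := by
      rw [hmv i, dotProduct_smul, smul_eq_mul, hbb i i, if_pos rfl, mul_one]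
    have hbine : (⇑(b i) : Fin n → ℝ) ≠ 0 := by
      intro h0
      have := hbb i i
      rw [h0, if_pos rfl, zero_dotProduct] at this
      norm_num at this
    set v : Fin n → ℝ := c • ⇑(b i) - a • ⇑(b j) with hv
    have hBv : u ⬝ᵥ H *ᵥ v = 0 := by
      rw [hv, mulVec_sub, mulVec_smul, mulVec_smul, dotProduct_sub,
        dotProduct_smul, dotProduct_smul, smul_eq_mul, smul_eq_mul, ← ha, ← hcdef]
      ring
    have hQv : v ⬝ᵥ H *ᵥ v = c ^ 2 * li + a ^ 2 * lj := by
      rw [hv, mulVec_sub, mulVec_smul, mulVec_smul, hmv i, hmv j]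
      simp only [sub_dotProduct, dotProduct_sub, smul_dotProduct, dotProduct_smul,
        smul_eq_mul, hbb, hij, Ne.symm hij, if_true, if_false, eq_self_iff_true]
      ring
    rcases eq_or_ne v 0 with hv0 | hv0
    · -- then a = c = 0; use b i itself
      have hcz : a = 0 := by
        have : (⇑(b j) : Fin n → ℝ) ⬝ᵥ v = -a := by
          rw [hv, dotProduct_sub, dotProduct_smul, dotProduct_smul, smul_eq_mul,
            smul_eq_mul, hbb j i, hbb j j, if_neg (Ne.symm hij), if_pos rfl]
          ring
        rw [hv0, dotProduct_zero] at this
        linarith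
      exact key (⇑(b i)) hbine (by rw [← ha, hcz]) (by rw [hQbi]; exact hi.2.le)
    · exact key v hv0 hBv (by rw [hQv]; nlinarith [sq_nonneg a, sq_nonneg c, hi.2, hj.2])
  obtain ⟨i0, hi0⟩ := hexists
  have hge : 1 ≤ (Finset.univ.filter fun i => 0 < hA.eigenvalues i).card :=
    Finset.card_pos.mpr ⟨i0, Finset.mem_filter.mpr ⟨Finset.mem_univ i0, hi0⟩⟩
  omega
end

section
/- Let f be a homogeneous quadratic polynomial with nonnegative coefficients in n variables whose Hessian H has exactly one positive eigenvalue. Then for every nonzero u ∈ ℝⁿ with nonnegative entries and every v ∈ ℝⁿ, (uᵀHv)² ≥ (uᵀHu)(vᵀHv). -/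
open MvPolynomial Matrix

/-- Key hyperbolic Cauchy–Schwarz lemma in eigencoordinates. -/
lemma key_lemma {n : ℕ} (lam : Fin n → ℝ) (p : Fin n)
    (hneg : ∀ i, i ≠ p → lam i ≤ 0) (a c : Fin n → ℝ)
    (hQa : 0 < ∑ i, lam i * a i * a i) (hB : ∑ i, lam i * a i * c i = 0) :
    ∑ i, lam i * c i * c i ≤ 0 := by
  classical
  set s := Finset.univ.erase p with hs
  have hsplit : ∀ x y : Fin n → ℝ,
      ∑ i, lam i * x i * y i = lam p * x p * y p + ∑ i ∈ s, lam i * x i * y i := by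
    intro x y
    rw [hs, ← Finset.add_sum_erase _ _ (Finset.mem_univ p)]
  have CS : (∑ i ∈ s, (-lam i) * a i * c i) ^ 2 ≤
      (∑ i ∈ s, (-lam i) * a i * a i) * ∑ i ∈ s, (-lam i) * c i * c i := by
    apply Finset.sum_sq_le_sum_mul_sum_of_sq_eq_mul
    · intro i hi
      have := hneg i (Finset.ne_of_mem_erase hi)
      nlinarith [sq_nonneg (a i)]
    · intro i hi
      have := hneg i (Finset.ne_of_mem_erase hi)
      nlinarith [sq_nonneg (c i)]
    · intro i hi; ring
  have h1 : lam p * a p * a p > ∑ i ∈ s, (-lam i) * a i * a i := by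
    have := hsplit a a
    have e : ∑ i ∈ s, (-lam i) * a i * a i = -∑ i ∈ s, lam i * a i * a i := by
      rw [← Finset.sum_neg_distrib]; apply Finset.sum_congr rfl; intros; ring
    rw [e]; linarith
  have h2 : lam p * a p * c p = ∑ i ∈ s, (-lam i) * a i * c i := by
    have := hsplit a c
    have e : ∑ i ∈ s, (-lam i) * a i * c i = -∑ i ∈ s, lam i * a i * c i := by
      rw [← Finset.sum_neg_distrib]; apply Finset.sum_congr rfl; intros; ring
    rw [e]; linarith
  have hsa : 0 ≤ ∑ i ∈ s, (-lam i) * a i * a i := by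
    apply Finset.sum_nonneg; intro i hi
    have := hneg i (Finset.ne_of_mem_erase hi); nlinarith [sq_nonneg (a i)]
  have hsc : 0 ≤ ∑ i ∈ s, (-lam i) * c i * c i := by
    apply Finset.sum_nonneg; intro i hi
    have := hneg i (Finset.ne_of_mem_erase hi); nlinarith [sq_nonneg (c i)]
  rw [hsplit c c]
  by_contra hcon
  push_neg at hcon
  have hQc : lam p * c p * c p > ∑ i ∈ s, (-lam i) * c i * c i := by
    have e : ∑ i ∈ s, (-lam i) * c i * c i = -∑ i ∈ s, lam i * c i * c i := by
      rw [← Finset.sum_neg_distrib]; apply Finset.sum_congr rfl; intros; ring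
    rw [e]; linarith
  have hlp : 0 < lam p := by nlinarith [sq_nonneg (a p)]
  have hcp : 0 < lam p * c p * c p := lt_of_le_of_lt hsc hQc
  have m1 : (∑ i ∈ s, (-lam i) * a i * a i) * (∑ i ∈ s, (-lam i) * c i * c i)
      ≤ (∑ i ∈ s, (-lam i) * a i * a i) * (lam p * c p * c p) :=
    mul_le_mul_of_nonneg_left hQc.le hsa
  have m2 : (∑ i ∈ s, (-lam i) * a i * a i) * (lam p * c p * c p)
      < (lam p * a p * a p) * (lam p * c p * c p) :=
    mul_lt_mul_of_pos_right h1 hcp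
  have h2sq : (∑ i ∈ s, (-lam i) * a i * c i) ^ 2 = (lam p * a p * c p) ^ 2 := by
    rw [← h2]
  have hring : (lam p * a p * a p) * (lam p * c p * c p) = (lam p * a p * c p) ^ 2 := by ring
  linarith [CS]

lemma hess_entry_nonneg {n : ℕ} (f : MvPolynomial (Fin n) ℝ)
    (hnn : ∀ α : Fin n →₀ ℕ, 0 ≤ f.coeff α) (i j : Fin n) :
    0 ≤ polyHessian f 0 i j := by
  show 0 ≤ eval 0 (pderiv i (pderiv j f))
  conv_rhs => rw [← support_sum_monomial_coeff f]
  rw [map_sum, map_sum, map_sum]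
  apply Finset.sum_nonneg
  intro α _
  rw [pderiv_monomial, pderiv_monomial, eval_monomial]
  apply mul_nonneg
  · apply mul_nonneg (mul_nonneg (hnn α) (Nat.cast_nonneg _)) (Nat.cast_nonneg _)
  · apply Finset.prod_nonneg
    intro k _
    simp only [Pi.zero_apply]
    positivity

lemma coord_form {n : ℕ} (H : Matrix (Fin n) (Fin n) ℝ) (hA : H.IsHermitian)
    (x y : Fin n → ℝ) :
    x ⬝ᵥ H.mulVec y = ∑ i, hA.eigenvalues i *
      ((star (hA.eigenvectorUnitary : Matrix (Fin n) (Fin n) ℝ)).mulVec x i) *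
      ((star (hA.eigenvectorUnitary : Matrix (Fin n) (Fin n) ℝ)).mulVec y i) := by
  set U : Matrix (Fin n) (Fin n) ℝ := (hA.eigenvectorUnitary : Matrix (Fin n) (Fin n) ℝ) with hU
  have hspec : H = U * diagonal (RCLike.ofReal ∘ hA.eigenvalues) * star U :=
    hA.spectral_theorem
  have hsU : star U = Uᵀ := by
    ext i j; simp [Matrix.star_eq_conjTranspose, Matrix.conjTranspose_apply]
  conv_lhs => rw [hspec]
  rw [← mulVec_mulVec, ← mulVec_mulVec, dotProduct_mulVec, ← mulVec_transpose, ← hsU]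
  simp only [dotProduct, mulVec_diagonal, Function.comp, RCLike.ofReal_real_eq_id, id]
  exact Finset.sum_congr rfl fun i _ => by ring

theorem stmt1 {n : ℕ} (f : MvPolynomial (Fin n) ℝ)
    (hf : f.IsHomogeneous 2)
    (hnn : ∀ α : Fin n →₀ ℕ, 0 ≤ f.coeff α)
    (H : Matrix (Fin n) (Fin n) ℝ) (hH : H = polyHessian f 0)
    (hone : ExactlyOnePosEig H) :
    ∀ u : Fin n → ℝ, u ≠ 0 → (∀ i, 0 ≤ u i) → ∀ v : Fin n → ℝ,
      (u ⬝ᵥ H.mulVec u) * (v ⬝ᵥ H.mulVec v) ≤ (u ⬝ᵥ H.mulVec v) ^ 2 := by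
  intro u hu0 hunn v
  obtain ⟨hA, hcard⟩ := hone
  set lam := hA.eigenvalues with hlam
  obtain ⟨p, hp⟩ := Finset.card_eq_one.mp hcard
  have hneg : ∀ i, i ≠ p → lam i ≤ 0 := by
    intro i hi
    by_contra h
    push_neg at h
    have hmem : i ∈ Finset.univ.filter fun k => 0 < lam k :=
      Finset.mem_filter.mpr ⟨Finset.mem_univ _, h⟩
    rw [hp] at hmem
    exact hi (Finset.mem_singleton.mp hmem)
  set c : (Fin n → ℝ) → Fin n → ℝ :=
    fun x => (star (hA.eigenvectorUnitary : Matrix (Fin n) (Fin n) ℝ)).mulVec x with hc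
  have hBform : ∀ x y, x ⬝ᵥ H.mulVec y = ∑ i, lam i * c x i * c y i :=
    fun x y => coord_form H hA x y
  have hsymm : ∀ x y, x ⬝ᵥ H.mulVec y = y ⬝ᵥ H.mulVec x := by
    intro x y; rw [hBform, hBform]
    exact Finset.sum_congr rfl fun i _ => by ring
  have hQu : 0 ≤ u ⬝ᵥ H.mulVec u := by
    rw [hH]
    simp only [dotProduct, mulVec]
    apply Finset.sum_nonneg
    intro i _
    apply mul_nonneg (hunn i)
    apply Finset.sum_nonneg
    intro j _
    exact mul_nonneg (hess_entry_nonneg f hnn i j) (hunn j)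
  rcases eq_or_lt_of_le hQu with hQ0 | hQpos
  · rw [← hQ0, zero_mul]; exact sq_nonneg _
  · set t := (u ⬝ᵥ H.mulVec v) / (u ⬝ᵥ H.mulVec u) with ht
    set w := v - t • u with hw
    have hQune : u ⬝ᵥ H.mulVec u ≠ 0 := ne_of_gt hQpos
    have hBuw : u ⬝ᵥ H.mulVec w = 0 := by
      rw [hw, mulVec_sub, mulVec_smul, dotProduct_sub, dotProduct_smul, smul_eq_mul, ht]
      field_simp
      ring
    have hQw : w ⬝ᵥ H.mulVec w ≤ 0 := by
      rw [hBform]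
      exact key_lemma lam p hneg (c u) (c w)
        (by rw [← hBform]; exact hQpos) (by rw [← hBform]; exact hBuw)
    have hv : v = w + t • u := by rw [hw]; abel
    have hQv : v ⬝ᵥ H.mulVec v =
        w ⬝ᵥ H.mulVec w + 2 * t * (u ⬝ᵥ H.mulVec w) + t ^ 2 * (u ⬝ᵥ H.mulVec u) := by
      conv_lhs => rw [hv]
      rw [mulVec_add, mulVec_smul, dotProduct_add, add_dotProduct, add_dotProduct,
        dotProduct_smul, dotProduct_smul, smul_dotProduct, smul_dotProduct, hsymm w u]
      simp only [smul_eq_mul]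
      ring
    have hBuv : u ⬝ᵥ H.mulVec v = t * (u ⬝ᵥ H.mulVec u) := by
      rw [ht]; field_simp
    rw [hBuv, hQv, hBuw]
    nlinarith [hQpos, hQw, sq_nonneg t]
end

section
/- Let f be a nonzero homogeneous polynomial of degree d ≥ 3 in n variables with nonnegative coefficients. Suppose that for every i, the Hessian of ∂ᵢf has exactly one positive eigenvalue at every point w with positive coordinates. Then for every such w, the kernel of the Hessian of f at w equals the intersection over i of the kernels of the Hessians of ∂ᵢf at w. -/
open MvPolynomial Matrix

section auxlemmas
open Finset
variable {n : ℕ}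

lemma herm_decomp {n : ℕ} (A : Matrix (Fin n) (Fin n) ℝ) (hA : A.IsHermitian) :
    ∃ c : (Fin n → ℝ) → (Fin n → ℝ),
      (∀ x y, x ⬝ᵥ A.mulVec y = ∑ i, hA.eigenvalues i * (c x i * c y i)) ∧
      (∀ z, A.mulVec z = 0 ↔ ∀ i, hA.eigenvalues i * c z i = 0) := by
  set U : Matrix (Fin n) (Fin n) ℝ := (hA.eigenvectorUnitary : Matrix (Fin n) (Fin n) ℝ) with hU
  have hUU : star U * U = 1 := (Matrix.mem_unitaryGroup_iff').mp hA.eigenvectorUnitary.2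
  have hsU : star U = Uᵀ := Matrix.conjTranspose_eq_transpose_of_trivial U
  have hspec : A = U * Matrix.diagonal hA.eigenvalues * star U := by
    have := hA.spectral_theorem
    simpa using this
  refine ⟨fun x => (star U).mulVec x, ?_, ?_⟩
  · intro x y
    conv_lhs => rw [hspec]
    rw [← Matrix.mulVec_mulVec, ← Matrix.mulVec_mulVec,
      Matrix.dotProduct_mulVec x U, ← Matrix.mulVec_transpose, ← hsU,
      Matrix.dotProduct_mulVec, ← Matrix.mulVec_transpose]
    rw [Matrix.diagonal_transpose]
    simp only [Matrix.mulVec_diagonal, dotProduct]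
    exact Finset.sum_congr rfl fun i _ => by ring
  · intro z
    constructor
    · intro h i
      have h0 : (Matrix.diagonal hA.eigenvalues).mulVec ((star U).mulVec z) = 0 := by
        have : (star U).mulVec (A.mulVec z) = 0 := by rw [h, Matrix.mulVec_zero]
        rw [hspec] at this
        rw [← Matrix.mulVec_mulVec, ← Matrix.mulVec_mulVec, Matrix.mulVec_mulVec,
          hUU] at this
        simpa using this
      have := congrFun h0 i
      simpa [Matrix.mulVec_diagonal] using this
    · intro h
      rw [hspec]
      rw [← Matrix.mulVec_mulVec, ← Matrix.mulVec_mulVec]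
      have h0 : (Matrix.diagonal hA.eigenvalues).mulVec ((star U).mulVec z) = 0 := by
        funext i
        simpa [Matrix.mulVec_diagonal] using h i
      rw [h0, Matrix.mulVec_zero]

lemma onePos_key {n : ℕ} (A : Matrix (Fin n) (Fin n) ℝ)
    (hA : A.IsHermitian)
    (h1 : (Finset.univ.filter fun i => 0 < hA.eigenvalues i).card = 1)
    (w z : Fin n → ℝ) (hww : 0 < w ⬝ᵥ A.mulVec w) (hwz : w ⬝ᵥ A.mulVec z = 0) :
    z ⬝ᵥ A.mulVec z ≤ 0 ∧ (z ⬝ᵥ A.mulVec z = 0 → A.mulVec z = 0) := by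
  obtain ⟨c, hc, hker⟩ := herm_decomp A hA
  obtain ⟨i₀, hi₀⟩ := Finset.card_eq_one.mp h1
  set lam := hA.eigenvalues with hlam
  have hpos : 0 < lam i₀ := by
    have : i₀ ∈ Finset.univ.filter fun i => 0 < lam i := by rw [hi₀]; simp
    simpa using this
  have hneg : ∀ i, i ≠ i₀ → lam i ≤ 0 := by
    intro i hi
    by_contra h
    push_neg at h
    have : i ∈ Finset.univ.filter fun j => 0 < lam j :=
      Finset.mem_filter.mpr ⟨Finset.mem_univ i, h⟩
    rw [hi₀] at this
    exact hi (Finset.mem_singleton.mp this)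
  set S := Finset.univ.erase i₀ with hS
  set a := c w with ha
  set b := c z with hb
  set L := lam i₀
  set a0 := a i₀
  set b0 := b i₀
  set Bww := ∑ i ∈ S, (-lam i) * (a i * a i) with hBww
  set Bwz := ∑ i ∈ S, (-lam i) * (a i * b i) with hBwz
  set Bzz := ∑ i ∈ S, (-lam i) * (b i * b i) with hBzz
  have hmu : ∀ i ∈ S, 0 ≤ -lam i := by
    intro i hi
    have := hneg i (Finset.ne_of_mem_erase hi)
    linarith
  have hsplit : ∀ x y : Fin n → ℝ, x ⬝ᵥ A.mulVec y
      = lam i₀ * (c x i₀ * c y i₀) + ∑ i ∈ S, lam i * (c x i * c y i) := by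
    intro x y
    rw [hc x y, ← Finset.add_sum_erase _ _ (Finset.mem_univ i₀)]
  have hww' : 0 < L * (a0 * a0) - Bww := by
    have := hsplit w w
    rw [this] at hww
    have : ∑ i ∈ S, lam i * (a i * a i) = -Bww := by
      rw [hBww, ← Finset.sum_neg_distrib]
      exact Finset.sum_congr rfl fun i _ => by ring
    rw [this] at hww; linarith
  have hwz' : L * (a0 * b0) = Bwz := by
    have h2 := hsplit w z
    rw [hwz] at h2
    have : ∑ i ∈ S, lam i * (a i * b i) = -Bwz := by
      rw [hBwz, ← Finset.sum_neg_distrib]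
      exact Finset.sum_congr rfl fun i _ => by ring
    rw [this] at h2; linarith
  have hzz' : z ⬝ᵥ A.mulVec z = L * (b0 * b0) - Bzz := by
    have h2 := hsplit z z
    have : ∑ i ∈ S, lam i * (b i * b i) = -Bzz := by
      rw [hBzz, ← Finset.sum_neg_distrib]
      exact Finset.sum_congr rfl fun i _ => by ring
    rw [this] at h2; linarith
  have hBwwn : 0 ≤ Bww := Finset.sum_nonneg fun i hi =>
    mul_nonneg (hmu i hi) (mul_self_nonneg _)
  have hBzzn : 0 ≤ Bzz := Finset.sum_nonneg fun i hi =>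
    mul_nonneg (hmu i hi) (mul_self_nonneg _)
  have hCS : Bwz ^ 2 ≤ Bww * Bzz := by
    apply Finset.sum_sq_le_sum_mul_sum_of_sq_eq_mul S
      (fun i hi => mul_nonneg (hmu i hi) (mul_self_nonneg _))
      (fun i hi => mul_nonneg (hmu i hi) (mul_self_nonneg _))
    intro i hi
    ring
  have hpos' : 0 < L * (a0 * a0) := by linarith
  have hCS' : (L * (a0 * b0)) ^ 2 ≤ Bww * Bzz := by rw [hwz']; exact hCS
  have h5 : (L * (a0 * a0)) * (L * (b0 * b0)) ≤ (L * (a0 * a0)) * Bzz := by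
    calc (L * (a0 * a0)) * (L * (b0 * b0)) = (L * (a0 * b0)) ^ 2 := by ring
      _ ≤ Bww * Bzz := hCS'
      _ ≤ (L * (a0 * a0)) * Bzz :=
        mul_le_mul_of_nonneg_right (by linarith) hBzzn
  have hLb : L * (b0 * b0) ≤ Bzz := le_of_mul_le_mul_left h5 hpos'
  have hq : z ⬝ᵥ A.mulVec z ≤ 0 := by rw [hzz']; linarith
  refine ⟨hq, ?_⟩
  intro hzz0
  rw [hzz'] at hzz0
  have hzz0' : L * (b0 * b0) = Bzz := by linarith
  have hBzz0 : Bzz = 0 := by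
    have e1 : (L * (a0 * a0)) * Bzz = (L * (a0 * b0)) ^ 2 := by
      rw [← hzz0']; ring
    have h6 : (L * (a0 * a0)) * Bzz ≤ Bww * Bzz := e1 ▸ hCS'
    nlinarith [hww', hBzzn, h6]
  have hb0 : b0 = 0 := by
    have : L * (b0 * b0) = 0 := by rw [hzz0', hBzz0]
    have := mul_eq_zero.mp this
    rcases this with h | h
    · exact absurd h (ne_of_gt hpos)
    · exact mul_self_eq_zero.mp h
  rw [hker]
  intro i
  by_cases hi : i = i₀
  · rw [hi]; change L * b0 = 0; rw [hb0, mul_zero]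
  · have hiS : i ∈ S := Finset.mem_erase.mpr ⟨hi, Finset.mem_univ i⟩
    have hterm : (-lam i) * (b i * b i) = 0 := by
      have := (Finset.sum_eq_zero_iff_of_nonneg (fun j hj =>
        mul_nonneg (hmu j hj) (mul_self_nonneg _))).mp hBzz0 i hiS
      exact this
    rcases mul_eq_zero.mp hterm with h | h
    · have : lam i = 0 := by linarith
      rw [this, zero_mul]
    · have hbi : b i = 0 := mul_self_eq_zero.mp h
      change lam i * b i = 0
      rw [hbi, mul_zero]



lemma degree_eq_sum_univ (s : Fin n →₀ ℕ) : s.degree = ∑ i, s i :=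
  Finset.sum_subset (Finset.subset_univ _)
    (fun i _ hi => Finsupp.notMem_support_iff.mp hi)

lemma sub_single_add_single {s : Fin n →₀ ℕ} {i : Fin n} (h : s i ≠ 0) :
    s - Finsupp.single i 1 + Finsupp.single i 1 = s := by
  ext j
  simp only [Finsupp.add_apply, Finsupp.tsub_apply, Finsupp.single_apply]
  rcases eq_or_ne i j with rfl | hij
  · have h1 : (if i = i then (1:ℕ) else 0) = 1 := if_pos rfl
    rw [h1]
    omega
  · simp [hij]

lemma pderiv_as_sum (f : MvPolynomial (Fin n) ℝ) (i : Fin n) :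
    pderiv i f = ∑ s ∈ f.support, monomial (s - Finsupp.single i 1) (f.coeff s * s i) := by
  conv_lhs => rw [f.as_sum]
  rw [map_sum]
  exact Finset.sum_congr rfl fun s _ => pderiv_monomial

lemma coeff_pderiv_nonneg {f : MvPolynomial (Fin n) ℝ} (hnn : ∀ α, 0 ≤ f.coeff α)
    (i : Fin n) (α : Fin n →₀ ℕ) : 0 ≤ (pderiv i f).coeff α := by
  classical
  rw [pderiv_as_sum, coeff_sum]
  apply Finset.sum_nonneg
  intro s _
  rw [coeff_monomial]
  split
  · exact mul_nonneg (hnn s) (Nat.cast_nonneg _)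
  · exact le_rfl

lemma pderiv_isHomogeneous {f : MvPolynomial (Fin n) ℝ} {d : ℕ}
    (hf : f.IsHomogeneous d) (i : Fin n) : (pderiv i f).IsHomogeneous (d - 1) := by
  rw [pderiv_as_sum]
  apply MvPolynomial.IsHomogeneous.sum
  intro s hs
  by_cases h : s i = 0
  · have : (s i : ℝ) = 0 := by exact_mod_cast h
    rw [this, mul_zero, map_zero]
    exact MvPolynomial.isHomogeneous_zero _ _ _
  · apply MvPolynomial.isHomogeneous_monomial
    have hdeg : s.degree = d := by
      have := hf (MvPolynomial.mem_support_iff.mp hs)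
      rw [Finsupp.degree_eq_weight_one]; exact this
    have h1 : (Finsupp.single i 1 : Fin n →₀ ℕ).degree = 1 := by
      rw [degree_eq_sum_univ]
      simp [Finsupp.single_apply]
    have hadd : (s - Finsupp.single i 1).degree + (Finsupp.single i 1 : Fin n →₀ ℕ).degree
        = s.degree := by
      rw [degree_eq_sum_univ, degree_eq_sum_univ, degree_eq_sum_univ, ← Finset.sum_add_distrib]
      apply Finset.sum_congr rfl
      intro j _
      have := congrFun (congrArg (fun (t : Fin n →₀ ℕ) => (t : Fin n → ℕ)) (sub_single_add_single h)) j
      simpa using this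
    have hd1 : 1 ≤ s i := Nat.one_le_iff_ne_zero.mpr h
    have : s i ≤ s.degree := degree_eq_sum_univ s ▸ Finset.single_le_sum (f := fun j => s j) (fun _ _ => Nat.zero_le _) (Finset.mem_univ i)
    omega

lemma pderiv_pderiv_comm (i j : Fin n) (g : MvPolynomial (Fin n) ℝ) :
    pderiv i (pderiv j g) = pderiv j (pderiv i g) := by
  rcases eq_or_ne i j with rfl | hij
  · rfl
  · rw [g.as_sum, map_sum, map_sum, map_sum, map_sum]
    apply Finset.sum_congr rfl
    intro s _
    rw [pderiv_monomial, pderiv_monomial, pderiv_monomial, pderiv_monomial]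
    have e1 : ((s - Finsupp.single j 1 : Fin n →₀ ℕ)) i = s i := by
      simp [Finsupp.tsub_apply, Finsupp.single_apply, Ne.symm hij]
    have e2 : ((s - Finsupp.single i 1 : Fin n →₀ ℕ)) j = s j := by
      simp [Finsupp.tsub_apply, Finsupp.single_apply, hij]
    rw [e1, e2, tsub_tsub, tsub_tsub, add_comm (Finsupp.single j 1)]
    ring_nf

lemma euler_poly {e : ℕ} {g : MvPolynomial (Fin n) ℝ} (hg : g.IsHomogeneous e) :
    ∑ k, X k * pderiv k g = C (e : ℝ) * g := by
  classical
  conv_rhs => rw [g.as_sum]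
  rw [Finset.mul_sum]
  have lhs_eq : ∀ k, X k * pderiv k g
      = ∑ s ∈ g.support, monomial s ((s k : ℝ) * g.coeff s) := by
    intro k
    rw [pderiv_as_sum, Finset.mul_sum]
    apply Finset.sum_congr rfl
    intro s _
    by_cases h : s k = 0
    · rw [h]
      simp
    · rw [X, monomial_mul, one_mul, add_comm, sub_single_add_single h, mul_comm]
  simp_rw [lhs_eq]
  rw [Finset.sum_comm]
  apply Finset.sum_congr rfl
  intro s hs
  rw [C_mul_monomial, ← map_sum (monomial s)]
  congr 1
  rw [← Finset.sum_mul]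
  congr 1
  have hdeg : s.degree = e := by
    have := hg (MvPolynomial.mem_support_iff.mp hs)
    rw [Finsupp.degree_eq_weight_one]; exact this
  rw [← hdeg, degree_eq_sum_univ]
  push_cast
  rfl

lemma euler_eval {e : ℕ} {g : MvPolynomial (Fin n) ℝ} (hg : g.IsHomogeneous e)
    (w : Fin n → ℝ) :
    ∑ k, w k * eval w (pderiv k g) = (e : ℝ) * eval w g := by
  have := congrArg (eval w) (euler_poly hg)
  rw [map_sum, eval_mul, eval_C] at this
  simpa [eval_mul] using this

lemma eval_pos_of_nonneg {g : MvPolynomial (Fin n) ℝ} (hg0 : g ≠ 0)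
    (hnn : ∀ α, 0 ≤ g.coeff α) {w : Fin n → ℝ} (hw : ∀ k, 0 < w k) :
    0 < eval w g := by
  rw [eval_eq']
  apply Finset.sum_pos
  · intro s hs
    exact mul_pos (lt_of_le_of_ne (hnn s) (Ne.symm (MvPolynomial.mem_support_iff.mp hs)))
      (Finset.prod_pos fun i _ => pow_pos (hw i) _)
  · exact MvPolynomial.support_nonempty.mpr hg0

end auxlemmas

theorem stmt3 {n d : ℕ} (hd : 3 ≤ d) (f : MvPolynomial (Fin n) ℝ)
    (hf : f.IsHomogeneous d) (hf0 : f ≠ 0)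
    (hnn : ∀ α : Fin n →₀ ℕ, 0 ≤ f.coeff α)
    (hdi : ∀ i : Fin n, pderiv i f ≠ 0)
    (hhess : ∀ i : Fin n, ∀ w : Fin n → ℝ, (∀ k, 0 < w k) →
      ExactlyOnePosEig (polyHessian (pderiv i f) w)) :
    ∀ w : Fin n → ℝ, (∀ k, 0 < w k) → ∀ z : Fin n → ℝ,
      ((polyHessian f w).mulVec z = 0 ↔
        ∀ i : Fin n, (polyHessian (pderiv i f) w).mulVec z = 0) := by
  intro w hw z
  set e2 : ℕ := d - 2 with he2
  have he2pos : (0:ℝ) < (e2:ℝ) := by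
    have : 0 < e2 := by omega
    exact_mod_cast this
  have hg1 : ∀ i, (pderiv i f).IsHomogeneous (d - 1) := pderiv_isHomogeneous hf
  have hg2 : ∀ j k : Fin n, (pderiv j (pderiv k f)).IsHomogeneous e2 := by
    intro j k
    have h := pderiv_isHomogeneous (hg1 k) j
    have : d - 1 - 1 = e2 := by omega
    rwa [this] at h
  -- (I1)
  have I1 : ∀ j k : Fin n,
      ∑ i, w i * (polyHessian (pderiv i f) w) j k = (e2:ℝ) * polyHessian f w j k := by
    intro j k
    have h1 : ∀ i : Fin n, (polyHessian (pderiv i f) w) j k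
        = eval w (pderiv i (pderiv j (pderiv k f))) := by
      intro i
      show eval w (pderiv j (pderiv k (pderiv i f))) = _
      rw [pderiv_pderiv_comm k i f, pderiv_pderiv_comm j i (pderiv k f)]
    simp_rw [h1]
    exact euler_eval (hg2 j k) w
  -- (J1)
  have J1 : ∀ x : Fin n → ℝ, ∀ j : Fin n,
      ∑ i, w i * ((polyHessian (pderiv i f) w).mulVec x) j
        = (e2:ℝ) * ((polyHessian f w).mulVec x) j := by
    intro x j
    simp only [Matrix.mulVec, dotProduct]
    calc ∑ i, w i * ∑ k, (polyHessian (pderiv i f) w) j k * x k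
        = ∑ i, ∑ k, (w i * (polyHessian (pderiv i f) w) j k) * x k := by
          simp_rw [Finset.mul_sum, mul_assoc]
      _ = ∑ k, ∑ i, (w i * (polyHessian (pderiv i f) w) j k) * x k := Finset.sum_comm
      _ = ∑ k, (∑ i, w i * (polyHessian (pderiv i f) w) j k) * x k := by
          simp_rw [Finset.sum_mul]
      _ = ∑ k, ((e2:ℝ) * polyHessian f w j k) * x k := by
          exact Finset.sum_congr rfl fun k _ => by rw [I1 j k]
      _ = (e2:ℝ) * ∑ k, polyHessian f w j k * x k := by
          rw [Finset.mul_sum]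
          exact Finset.sum_congr rfl fun k _ => by ring
  -- (I2)
  have I2 : ∀ (i : Fin n) (x : Fin n → ℝ),
      w ⬝ᵥ (polyHessian (pderiv i f) w).mulVec x
        = (e2:ℝ) * ((polyHessian f w).mulVec x) i := by
    intro i x
    simp only [Matrix.mulVec, dotProduct]
    calc ∑ j, w j * ∑ k, (polyHessian (pderiv i f) w) j k * x k
        = ∑ j, ∑ k, (w j * (polyHessian (pderiv i f) w) j k) * x k := by
          simp_rw [Finset.mul_sum, mul_assoc]
      _ = ∑ k, ∑ j, (w j * (polyHessian (pderiv i f) w) j k) * x k := Finset.sum_comm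
      _ = ∑ k, (∑ j, w j * (polyHessian (pderiv i f) w) j k) * x k := by
          simp_rw [Finset.sum_mul]
      _ = ∑ k, ((e2:ℝ) * eval w (pderiv k (pderiv i f))) * x k := by
          apply Finset.sum_congr rfl
          intro k _
          congr 1
          have h1 : ∀ j : Fin n, (polyHessian (pderiv i f) w) j k
              = eval w (pderiv j (pderiv k (pderiv i f))) := fun j => rfl
          simp_rw [h1]
          exact euler_eval (hg2 k i) w
      _ = (e2:ℝ) * ∑ k, (polyHessian f w) i k * x k := by
          rw [Finset.mul_sum]
          apply Finset.sum_congr rfl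
          intro k _
          have : (polyHessian f w) i k = eval w (pderiv k (pderiv i f)) := by
            show eval w (pderiv i (pderiv k f)) = _
            rw [pderiv_pderiv_comm i k f]
          rw [this]
          ring
  -- (A w) coordinates
  have hAwi : ∀ i : Fin n, ((polyHessian f w).mulVec w) i
      = ((d-1:ℕ):ℝ) * eval w (pderiv i f) := by
    intro i
    simp only [Matrix.mulVec, dotProduct]
    have h1 : ∀ k : Fin n, (polyHessian f w) i k * w k
        = w k * eval w (pderiv k (pderiv i f)) := by
      intro k
      have : (polyHessian f w) i k = eval w (pderiv k (pderiv i f)) := by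
        show eval w (pderiv i (pderiv k f)) = _
        rw [pderiv_pderiv_comm i k f]
      rw [this]; ring
    simp_rw [h1]
    exact euler_eval (hg1 i) w
  have I3 : ∀ i : Fin n, 0 < w ⬝ᵥ (polyHessian (pderiv i f) w).mulVec w := by
    intro i
    rw [I2 i w, hAwi i]
    have h1 : (0:ℝ) < ((d-1:ℕ):ℝ) := by exact_mod_cast (by omega : 0 < d - 1)
    exact mul_pos he2pos (mul_pos h1
      (eval_pos_of_nonneg (hdi i) (coeff_pderiv_nonneg hnn i) hw))
  have I4 : ∑ i, w i * (z ⬝ᵥ (polyHessian (pderiv i f) w).mulVec z)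
      = (e2:ℝ) * (z ⬝ᵥ (polyHessian f w).mulVec z) := by
    simp only [dotProduct]
    calc ∑ i, w i * ∑ j, z j * ((polyHessian (pderiv i f) w).mulVec z) j
        = ∑ i, ∑ j, z j * (w i * ((polyHessian (pderiv i f) w).mulVec z) j) := by
          simp_rw [Finset.mul_sum]
          exact Finset.sum_congr rfl fun i _ => Finset.sum_congr rfl fun j _ => by ring
      _ = ∑ j, ∑ i, z j * (w i * ((polyHessian (pderiv i f) w).mulVec z) j) :=
          Finset.sum_comm
      _ = ∑ j, z j * ∑ i, w i * ((polyHessian (pderiv i f) w).mulVec z) j := by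
          simp_rw [Finset.mul_sum]
      _ = ∑ j, z j * ((e2:ℝ) * ((polyHessian f w).mulVec z) j) := by
          exact Finset.sum_congr rfl fun j _ => by rw [J1 z j]
      _ = (e2:ℝ) * ∑ j, z j * ((polyHessian f w).mulVec z) j := by
          rw [Finset.mul_sum]
          exact Finset.sum_congr rfl fun j _ => by ring
  constructor
  · intro hAz
    have hq : ∀ i : Fin n, z ⬝ᵥ (polyHessian (pderiv i f) w).mulVec z ≤ 0 ∧
        (z ⬝ᵥ (polyHessian (pderiv i f) w).mulVec z = 0 →
          (polyHessian (pderiv i f) w).mulVec z = 0) := by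
      intro i
      obtain ⟨hH, hc⟩ := hhess i w hw
      apply onePos_key _ hH hc w z (I3 i)
      rw [I2 i z, hAz]
      simp
    have hsum0 : ∑ i, w i * (z ⬝ᵥ (polyHessian (pderiv i f) w).mulVec z) = 0 := by
      rw [I4, hAz, dotProduct_zero, mul_zero]
    have hterm : ∀ i ∈ Finset.univ, w i * (z ⬝ᵥ (polyHessian (pderiv i f) w).mulVec z) ≤ 0 := by
      intro i _
      have h2 := (hq i).1
      have := mul_le_mul_of_nonneg_left h2 (hw i).le
      simpa using this
    intro i
    have hz0 : w i * (z ⬝ᵥ (polyHessian (pderiv i f) w).mulVec z) = 0 :=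
      (Finset.sum_eq_zero_iff_of_nonpos hterm).mp hsum0 i (Finset.mem_univ i)
    have hq0 : z ⬝ᵥ (polyHessian (pderiv i f) w).mulVec z = 0 :=
      (mul_eq_zero.mp hz0).resolve_left (ne_of_gt (hw i))
    exact (hq i).2 hq0
  · intro h
    funext j
    have hJ := J1 z j
    have h0 : ∑ i, w i * ((polyHessian (pderiv i f) w).mulVec z) j = 0 :=
      Finset.sum_eq_zero fun i _ => by rw [h i]; simp
    rw [h0] at hJ
    show ((polyHessian f w).mulVec z) j = (0:ℝ)
    exact (mul_eq_zero.mp hJ.symm).resolve_left (ne_of_gt he2pos)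
end

section
/- A bivariate homogeneous polynomial f = Σ_{k=0}^d a_k w₁ᵏ w₂^{d−k} with nonnegative coefficients is Lorentzian if and only if the sequence a₀,…,a_d is ultra log-concave and has no internal zeros. -/
open MvPolynomial Matrix Finsupp

noncomputable def F (D : ℕ) (a : ℕ → ℝ) : MvPolynomial (Fin 2) ℝ :=
  ∑ k ∈ Finset.range (D + 1), (C (a k) * X 0 ^ k * X 1 ^ (D - k))

noncomputable def mm (D k : ℕ) : Fin 2 →₀ ℕ := Finsupp.single 0 k + Finsupp.single 1 (D - k)

lemma degree_fin2 (α : Fin 2 →₀ ℕ) : α.degree = α 0 + α 1 := by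
  calc α.degree = ∑ i : Fin 2, α i :=
        Finset.sum_subset (Finset.subset_univ _)
          (fun x _ hx => Finsupp.notMem_support_iff.mp hx)
    _ = α 0 + α 1 := Fin.sum_univ_two _

lemma fin2_ext {α β : Fin 2 →₀ ℕ} (h0 : α 0 = β 0) (h1 : α 1 = β 1) : α = β := by
  ext i; fin_cases i <;> assumption

@[simp] lemma mm_apply0 (D k : ℕ) : (mm D k) 0 = k := by simp [mm]
@[simp] lemma mm_apply1 (D k : ℕ) : (mm D k) 1 = D - k := by simp [mm]

lemma term_eq_monomial (c : ℝ) (D k : ℕ) :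
    (C c * X 0 ^ k * X 1 ^ (D - k) : MvPolynomial (Fin 2) ℝ) = monomial (mm D k) c := by
  rw [X_pow_eq_monomial, X_pow_eq_monomial, C_apply, monomial_mul, monomial_mul, mm]
  simp

lemma coeff_F (D : ℕ) (a : ℕ → ℝ) (α : Fin 2 →₀ ℕ) :
    (F D a).coeff α = if α 0 + α 1 = D then a (α 0) else 0 := by
  rw [F]
  simp only [term_eq_monomial]
  rw [MvPolynomial.coeff_sum]
  simp only [coeff_monomial]
  by_cases h : α 0 + α 1 = D
  · rw [Finset.sum_eq_single (α 0)]
    · rw [if_pos (fin2_ext (by simp) (by simp [← h])), if_pos h]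
    · intro b _ hb
      rw [if_neg]
      intro he
      exact hb (by simpa using congrArg (fun g => g 0) he)
    · intro hmem
      exact absurd (Finset.mem_range.2 (by omega)) hmem
  · rw [if_neg h, Finset.sum_eq_zero]
    intro k hk
    rw [if_neg]
    intro he
    have h0 := congrArg (fun g => g 0) he
    have h1 := congrArg (fun g => g 1) he
    simp at h0 h1
    exact h (by simp at hk; omega)

lemma F_eq_sum_monomial (D : ℕ) (a : ℕ → ℝ) :
    F D a = ∑ k ∈ Finset.range (D + 1), monomial (mm D k) (a k) := by
  rw [F]; exact Finset.sum_congr rfl fun k _ => term_eq_monomial _ _ _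

lemma sub0_mm (D k : ℕ) (h1 : 1 ≤ k) (h2 : k ≤ D) :
    mm D k - Finsupp.single 0 1 = mm (D - 1) (k - 1) := by
  apply fin2_ext <;> simp [Finsupp.tsub_apply] <;> omega

lemma sub1_mm (D k : ℕ) (h2 : k ≤ D - 1) :
    mm D k - Finsupp.single 1 1 = mm (D - 1) k := by
  apply fin2_ext <;> simp [Finsupp.tsub_apply] <;> omega

lemma pderiv0_F (D : ℕ) (a : ℕ → ℝ) (hD : 1 ≤ D) :
    pderiv 0 (F D a) = F (D - 1) (fun k => ((k : ℝ) + 1) * a (k + 1)) := by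
  rw [F_eq_sum_monomial, map_sum, F_eq_sum_monomial]
  simp only [pderiv_monomial, mm_apply0]
  rw [Finset.sum_range_succ']
  simp only [Nat.cast_zero, mul_zero, map_zero, add_zero]
  have hD1 : D - 1 + 1 = D := by omega
  rw [hD1]
  refine Finset.sum_congr rfl fun k hk => ?_
  rw [Finset.mem_range] at hk
  rw [sub0_mm D (k+1) (by omega) (by omega), show k+1-1 = k from rfl]
  congr 1
  push_cast; ring

lemma pderiv1_F (D : ℕ) (a : ℕ → ℝ) (hD : 1 ≤ D) :
    pderiv 1 (F D a) = F (D - 1) (fun k => ((D : ℝ) - k) * a k) := by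
  rw [F_eq_sum_monomial, map_sum, F_eq_sum_monomial]
  simp only [pderiv_monomial, mm_apply1]
  have hD1 : D - 1 + 1 = D := by omega
  rw [Finset.sum_range_succ, hD1]
  simp only [Nat.sub_self, Nat.cast_zero, mul_zero, map_zero, add_zero]
  refine Finset.sum_congr rfl fun k hk => ?_
  rw [Finset.mem_range] at hk
  rw [sub1_mm D k (by omega)]
  congr 1
  rw [mul_comm]
  congr 1
  rw [Nat.cast_sub (by omega)]

def NIZ (D : ℕ) (a : ℕ → ℝ) : Prop :=
  ∀ k₁ k₂ k₃, k₁ < k₂ → k₂ < k₃ → k₃ ≤ D → 0 < a k₁ * a k₃ → 0 < a k₂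

def ULC (D : ℕ) (a : ℕ → ℝ) : Prop :=
  ∀ k, 0 < k → k < D →
    (a (k - 1) / (D.choose (k - 1) : ℝ)) * (a (k + 1) / (D.choose (k + 1) : ℝ)) ≤
      (a k / (D.choose k : ℝ)) ^ 2

lemma mem_support_iff_F (D : ℕ) (a : ℕ → ℝ) (α : Fin 2 →₀ ℕ) :
    (F D a).coeff α ≠ 0 ↔ (α 0 + α 1 = D ∧ a (α 0) ≠ 0) := by
  rw [coeff_F]
  by_cases h : α 0 + α 1 = D <;> simp [h]

lemma mm_mem {a : ℕ → ℝ} {D k : ℕ} (hk : k ≤ D) (ha : a k ≠ 0) :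
    (F D a).coeff (mm D k) ≠ 0 := by
  rw [mem_support_iff_F]
  refine ⟨by simp; omega, by simpa using ha⟩

lemma mconvex_iff_niz {D : ℕ} {a : ℕ → ℝ} (hnn : ∀ k, k ≤ D → 0 ≤ a k) :
    MConvexSet {α | (F D a).coeff α ≠ 0} ↔ NIZ D a := by
  constructor
  · intro hM k₁ k₂ k₃ h12 h23 h3 hprod
    have ha1 : a k₁ ≠ 0 := fun h => by simp [h] at hprod
    have ha3 : a k₃ ≠ 0 := fun h => by simp [h] at hprod
    have key : ∀ n, k₁ + n ≤ k₃ → (F D a).coeff (mm D (k₃ - n)) ≠ 0 := by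
      intro n
      induction n with
      | zero => intro _; simpa using mm_mem h3 ha3
      | succ n ih =>
        intro hn
        have hmem := ih (by omega)
        have hb := mm_mem (a := a) (le_trans (by omega) h3) ha1
        obtain ⟨j, hj1, hj2⟩ := hM _ hmem _ hb 0 (by simp; omega)
        have hj : j = 1 := by
          by_contra hne
          have hj0 : j = 0 := by omega
          subst hj0
          simp at hj1
          omega
        subst hj
        have heq : mm D (k₃ - n) - Finsupp.single (0 : Fin 2) 1 + Finsupp.single 1 1
            = mm D (k₃ - (n + 1)) := by
          apply fin2_ext <;>
            simp [Finsupp.tsub_apply, Finsupp.add_apply] <;> omega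
        rw [heq] at hj2
        exact hj2
    have h2 := key (k₃ - k₂) (by omega)
    rw [show k₃ - (k₃ - k₂) = k₂ by omega] at h2
    rw [mem_support_iff_F] at h2
    have := h2.2
    simp at this
    exact lt_of_le_of_ne (hnn k₂ (by omega)) (Ne.symm this)
  · intro hN α hα β hβ i hi
    rw [Set.mem_setOf_eq, mem_support_iff_F] at hα hβ
    obtain ⟨hαs, hαa⟩ := hα
    obtain ⟨hβs, hβa⟩ := hβ
    have hposk : 0 < a (α 0) := lt_of_le_of_ne (hnn _ (by omega)) (Ne.symm hαa)
    have hposl : 0 < a (β 0) := lt_of_le_of_ne (hnn _ (by omega)) (Ne.symm hβa)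
    rcases (show i = 0 ∨ i = 1 by omega) with rfl | rfl
    · -- i = 0 : β 0 < α 0
      refine ⟨1, by omega, ?_⟩
      rw [Set.mem_setOf_eq, mem_support_iff_F]
      have e0 : (α - Finsupp.single 0 1 + Finsupp.single 1 1 : Fin 2 →₀ ℕ) 0 = α 0 - 1 := by
        simp [Finsupp.tsub_apply]
      have e1 : (α - Finsupp.single 0 1 + Finsupp.single 1 1 : Fin 2 →₀ ℕ) 1 = α 1 + 1 := by
        simp [Finsupp.tsub_apply]
      rw [e0, e1]
      refine ⟨by omega, ?_⟩
      rcases eq_or_lt_of_le (Nat.le_sub_one_of_lt hi) with he | hlt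
      · rw [← he]; exact hβa
      · have := hN (β 0) (α 0 - 1) (α 0) hlt (by omega) (by omega)
          (mul_pos hposl hposk)
        exact ne_of_gt this
    · -- i = 1 : β 1 < α 1, so α 0 < β 0
      have hkl : α 0 < β 0 := by omega
      refine ⟨0, by simpa using hkl, ?_⟩
      rw [Set.mem_setOf_eq, mem_support_iff_F]
      have e0 : (α - Finsupp.single 1 1 + Finsupp.single 0 1 : Fin 2 →₀ ℕ) 0 = α 0 + 1 := by
        simp [Finsupp.tsub_apply]
      have e1 : (α - Finsupp.single 1 1 + Finsupp.single 0 1 : Fin 2 →₀ ℕ) 1 = α 1 - 1 := by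
        simp [Finsupp.tsub_apply]
      rw [e0, e1]
      refine ⟨by omega, ?_⟩
      rcases eq_or_lt_of_le (Nat.succ_le_of_lt hkl) with he | hlt
      · rw [show α 0 + 1 = β 0 by omega]; exact hβa
      · have := hN (α 0) (α 0 + 1) (β 0) (by omega) hlt (by omega)
          (mul_pos hposk hposl)
        exact ne_of_gt this

lemma scale_iff {t x y z : ℝ} (ht : 0 < t) : (t*x)*(t*z) ≤ (t*y)^2 ↔ x*z ≤ y^2 := by
  have e1 : (t*x)*(t*z) = t^2*(x*z) := by ring
  have e2 : (t*y)^2 = t^2*(y^2) := by ring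
  rw [e1, e2, mul_le_mul_iff_right₀ (by positivity)]

lemma choose_id_b {D j : ℕ} (hj : j + 1 ≤ D) :
    (D : ℝ) * ((D-1).choose j) = (D.choose (j+1)) * ((j:ℝ)+1) := by
  have h1 : D * ((D-1).choose j) = D.choose (j+1) * (j+1) := by
    have := Nat.add_one_mul_choose_eq (D-1) j
    rwa [show D-1+1 = D by omega] at this
  exact_mod_cast h1

lemma choose_id_c {D j : ℕ} (hj : j ≤ D - 1) (hD : 1 ≤ D) :
    ((D : ℝ) - j) * (D.choose j) = (D : ℝ) * ((D-1).choose j) := by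
  have h2 := Nat.choose_succ_right_eq D j
  have h3 := Nat.add_one_mul_choose_eq (D-1) j
  rw [show D-1+1 = D by omega] at h3
  have h1 : (D - j) * (D.choose j) = D * ((D-1).choose j) := by
    calc (D - j) * (D.choose j) = D.choose j * (D - j) := Nat.mul_comm _ _
      _ = D.choose (j+1) * (j+1) := h2.symm
      _ = D * ((D-1).choose j) := h3.symm
  have := congrArg (fun n : ℕ => (n:ℝ)) h1
  push_cast [Nat.cast_sub (show j ≤ D by omega)] at this
  exact this

lemma qb_eq {D : ℕ} (a : ℕ → ℝ) {j : ℕ} (hj : j + 1 ≤ D) :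
    ((j:ℝ) + 1) * a (j+1) / ((D-1).choose j : ℝ) = D * (a (j+1) / (D.choose (j+1) : ℝ)) := by
  have hc1 : (((D-1).choose j) : ℝ) ≠ 0 := Nat.cast_ne_zero.2 (Nat.choose_pos (by omega)).ne'
  have hc2 : ((D.choose (j+1)) : ℝ) ≠ 0 := Nat.cast_ne_zero.2 (Nat.choose_pos hj).ne'
  have h := choose_id_b (D := D) (j := j) hj
  field_simp
  push_cast at h ⊢
  linear_combination (-1 : ℝ) * a (j+1) * h

lemma qc_eq {D : ℕ} (a : ℕ → ℝ) {j : ℕ} (hj : j ≤ D - 1) (hD : 1 ≤ D) :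
    ((D:ℝ) - j) * a j / ((D-1).choose j : ℝ) = D * (a j / (D.choose j : ℝ)) := by
  have hc1 : (((D-1).choose j) : ℝ) ≠ 0 := Nat.cast_ne_zero.2 (Nat.choose_pos hj).ne'
  have hc2 : ((D.choose j) : ℝ) ≠ 0 := Nat.cast_ne_zero.2 (Nat.choose_pos (by omega)).ne'
  have h := choose_id_c (D := D) (j := j) hj hD
  field_simp
  linear_combination a j * h

lemma cast_sub_one {k : ℕ} (hk : 1 ≤ k) : ((k-1 : ℕ):ℝ) + 1 = (k:ℝ) := by
  have : ((k-1:ℕ):ℝ) = (k:ℝ) - 1 := by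
    rw [Nat.cast_sub hk]; norm_num
  rw [this]; ring

lemma qb_eq' {D : ℕ} (a : ℕ → ℝ) {j : ℕ} (h1 : 1 ≤ j) (h2 : j ≤ D) :
    (j:ℝ) * a j / ((D-1).choose (j-1) : ℝ) = D * (a j / (D.choose j : ℝ)) := by
  have h := qb_eq a (D := D) (j := j-1) (by omega)
  rw [show j-1+1 = j by omega, cast_sub_one h1] at h
  exact h

lemma castD_pos {D : ℕ} (hD : 1 ≤ D) : (0:ℝ) < D := by exact_mod_cast Nat.pos_of_ne_zero (by omega)

lemma ulc_to_b {D : ℕ} {a : ℕ → ℝ} (h : ULC D a) :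
    ULC (D-1) (fun k => ((k:ℝ)+1) * a (k+1)) := by
  intro k hk0 hkD
  beta_reduce
  rw [cast_sub_one hk0, show k-1+1 = k by omega]
  have hD : 2 ≤ D := by omega
  rw [qb_eq' a hk0 (by omega), qb_eq a (by omega : k + 1 ≤ D),
    qb_eq a (by omega : (k+1) + 1 ≤ D)]
  rw [scale_iff (castD_pos (by omega))]
  have := h (k+1) (by omega) (by omega)
  simpa using this

lemma ulc_to_c {D : ℕ} {a : ℕ → ℝ} (h : ULC D a) :
    ULC (D-1) (fun k => ((D:ℝ) - k) * a k) := by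
  intro k hk0 hkD
  beta_reduce
  have hD : 2 ≤ D := by omega
  rw [qc_eq a (by omega : k - 1 ≤ D - 1) (by omega), qc_eq a (by omega : k ≤ D - 1) (by omega),
    qc_eq a (by omega : k + 1 ≤ D - 1) (by omega)]
  rw [scale_iff (castD_pos (by omega))]
  exact h k hk0 (by omega)

lemma ulc_of_bc {D : ℕ} {a : ℕ → ℝ} (hD : 3 ≤ D)
    (hb : ULC (D-1) (fun k => ((k:ℝ)+1) * a (k+1)))
    (hc : ULC (D-1) (fun k => ((D:ℝ) - k) * a k)) :
    ULC D a := by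
  intro k hk0 hkD
  rcases lt_or_ge k (D-1) with hcase | hcase
  · have h := hc k hk0 hcase
    beta_reduce at h
    rw [qc_eq a (by omega : k - 1 ≤ D - 1) (by omega), qc_eq a (by omega : k ≤ D - 1) (by omega),
      qc_eq a (by omega : k + 1 ≤ D - 1) (by omega)] at h
    rwa [scale_iff (castD_pos (by omega))] at h
  · -- k = D - 1, k ≥ 2
    have hk2 : 2 ≤ k := by omega
    have h := hb (k-1) (by omega) (by omega)
    beta_reduce at h
    rw [show k-1+1 = k by omega] at h
    rw [cast_sub_one (by omega : 1 ≤ k - 1), show k-1-1+1 = k-1 by omega,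
      cast_sub_one (by omega : 1 ≤ k)] at h
    rw [qb_eq' a (by omega : 1 ≤ k - 1) (by omega), qb_eq' a (by omega : 1 ≤ k) (by omega),
      qb_eq a (by omega : k + 1 ≤ D)] at h
    rwa [scale_iff (castD_pos (by omega))] at h

lemma niz_to_b {D : ℕ} {a : ℕ → ℝ} (h : NIZ D a) :
    NIZ (D-1) (fun k => ((k:ℝ)+1) * a (k+1)) := by
  intro k₁ k₂ k₃ h12 h23 h3 hp
  beta_reduce at hp ⊢
  have c1 : (0:ℝ) < (k₁:ℝ)+1 := by positivity
  have c3 : (0:ℝ) < (k₃:ℝ)+1 := by positivity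
  have hp' : 0 < a (k₁+1) * a (k₃+1) := by nlinarith [mul_pos c1 c3]
  have := h (k₁+1) (k₂+1) (k₃+1) (by omega) (by omega) (by omega) hp'
  positivity
  
lemma niz_to_c {D : ℕ} {a : ℕ → ℝ} (h : NIZ D a) (hD : 1 ≤ D) :
    NIZ (D-1) (fun k => ((D:ℝ) - k) * a k) := by
  intro k₁ k₂ k₃ h12 h23 h3 hp
  beta_reduce at hp ⊢
  have c1 : (0:ℝ) < (D:ℝ) - k₁ := by
    have : (k₁:ℝ) < D := by exact_mod_cast (by omega : k₁ < D)
    linarith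
  have c2 : (0:ℝ) < (D:ℝ) - k₂ := by
    have : (k₂:ℝ) < D := by exact_mod_cast (by omega : k₂ < D)
    linarith
  have c3 : (0:ℝ) < (D:ℝ) - k₃ := by
    have : (k₃:ℝ) < D := by exact_mod_cast (by omega : k₃ < D)
    linarith
  have hp' : 0 < a k₁ * a k₃ := by nlinarith [mul_pos c1 c3]
  have := h k₁ k₂ k₃ h12 h23 (by omega) hp'
  exact mul_pos c2 this

lemma F_homog (D : ℕ) (a : ℕ → ℝ) : (F D a).IsHomogeneous D := by
  intro α hα
  change (Finsupp.weight (fun _ => 1)) α = D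
  rw [← Finsupp.degree_eq_weight_one (R := ℕ), degree_fin2]
  rw [coeff_F] at hα
  by_cases h : α 0 + α 1 = D
  · exact h
  · simp [h] at hα

lemma F_coeff_nonneg {D : ℕ} {a : ℕ → ℝ} (hnn : ∀ k, k ≤ D → 0 ≤ a k) (α : Fin 2 →₀ ℕ) :
    0 ≤ (F D a).coeff α := by
  rw [coeff_F]
  by_cases h : α 0 + α 1 = D
  · simp only [h, if_true]; exact hnn _ (by omega)
  · simp [h]

lemma lorBase_F {D : ℕ} {a : ℕ → ℝ} (hnn : ∀ k, k ≤ D → 0 ≤ a k) (hniz : NIZ D a) :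
    LorBase D (F D a) :=
  ⟨F_homog D a, F_coeff_nonneg hnn, (mconvex_iff_niz hnn).2 hniz⟩

lemma lorBase_F_niz {D : ℕ} {a : ℕ → ℝ} (hnn : ∀ k, k ≤ D → 0 ≤ a k)
    (h : LorBase D (F D a)) : NIZ D a :=
  (mconvex_iff_niz hnn).1 h.2.2

lemma niz_trivial {D : ℕ} (hD : D ≤ 1) (a : ℕ → ℝ) : NIZ D a := by
  intro k₁ k₂ k₃ h12 h23 h3 _
  omega

lemma ulc_trivial {D : ℕ} (hD : D ≤ 1) (a : ℕ → ℝ) : ULC D a := by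
  intro k hk0 hkD
  omega

lemma trace_eq_sum_eigs {n : Type*} [Fintype n] [DecidableEq n] {A : Matrix n n ℝ}
    (hA : A.IsHermitian) : A.trace = ∑ i, hA.eigenvalues i := by
  rw [hA.trace_eq_sum_eigenvalues]
  simp

lemma det_eq_eigs {A : Matrix (Fin 2) (Fin 2) ℝ} (hA : A.IsHermitian) :
    A.det = hA.eigenvalues 0 * hA.eigenvalues 1 := by
  rw [hA.det_eq_prod_eigenvalues, Fin.prod_univ_two]
  simp

lemma card_filter_fin2 (p : Fin 2 → Prop) [DecidablePred p] :
    (Finset.univ.filter p).card = (if p 0 then 1 else 0) + (if p 1 then 1 else 0) := by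
  rw [Finset.card_filter, Fin.sum_univ_two]

lemma amope_iff {A : Matrix (Fin 2) (Fin 2) ℝ} (hA : A.IsHermitian) (htr : 0 ≤ A.trace) :
    AtMostOnePosEig A ↔ A.det ≤ 0 := by
  constructor
  · rintro ⟨hA', hcard⟩
    rw [card_filter_fin2] at hcard
    have hdet := det_eq_eigs hA'
    have htr' := trace_eq_sum_eigs hA'
    rw [Fin.sum_univ_two] at htr'
    set l0 := hA'.eigenvalues 0
    set l1 := hA'.eigenvalues 1
    by_contra hd
    push_neg at hd
    rw [hdet] at hd
    have hnb : ¬ (0 < l0 ∧ 0 < l1) := by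
      rintro ⟨h0, h1⟩
      rw [if_pos h0, if_pos h1] at hcard
      omega
    rcases lt_trichotomy l0 0 with h0 | h0 | h0
    · have h1 : l1 < 0 := by nlinarith
      have : A.trace < 0 := by rw [htr']; linarith
      linarith
    · rw [h0] at hd; simp at hd
    · have h1 : 0 < l1 := by nlinarith
      exact hnb ⟨h0, h1⟩
  · intro hd
    refine ⟨hA, ?_⟩
    rw [card_filter_fin2]
    have hdet := det_eq_eigs hA
    rw [hdet] at hd
    by_cases h0 : 0 < hA.eigenvalues 0 <;> by_cases h1 : 0 < hA.eigenvalues 1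
    · nlinarith
    · simp [h0, h1]
    · simp [h0, h1]
    · simp [h0, h1]

lemma F_zero (c : ℕ → ℝ) : F 0 c = C (c 0) := by
  simp [F, Finset.sum_range_one]

lemma hess2 (a : ℕ → ℝ) : polyHessian (F 2 a) 0 = !![2*a 2, a 1; a 1, 2*a 0] := by
  have h00 : pderiv (0 : Fin 2) (pderiv (0 : Fin 2) (F 2 a)) = C (2 * a 2) := by
    rw [pderiv0_F 2 a (by norm_num), show (2:ℕ)-1 = 1 from rfl,
      pderiv0_F 1 _ (by norm_num), show (1:ℕ)-1 = 0 from rfl, F_zero]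
    norm_num
  have h01 : pderiv (0 : Fin 2) (pderiv (1 : Fin 2) (F 2 a)) = C (a 1) := by
    rw [pderiv1_F 2 a (by norm_num), show (2:ℕ)-1 = 1 from rfl,
      pderiv0_F 1 _ (by norm_num), show (1:ℕ)-1 = 0 from rfl, F_zero]
    norm_num
  have h10 : pderiv (1 : Fin 2) (pderiv (0 : Fin 2) (F 2 a)) = C (a 1) := by
    rw [pderiv0_F 2 a (by norm_num), show (2:ℕ)-1 = 1 from rfl,
      pderiv1_F 1 _ (by norm_num), show (1:ℕ)-1 = 0 from rfl, F_zero]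
    norm_num
  have h11 : pderiv (1 : Fin 2) (pderiv (1 : Fin 2) (F 2 a)) = C (2 * a 0) := by
    rw [pderiv1_F 2 a (by norm_num), show (2:ℕ)-1 = 1 from rfl,
      pderiv1_F 1 _ (by norm_num), show (1:ℕ)-1 = 0 from rfl, F_zero]
    norm_num
  ext i j
  rcases (show i = 0 ∨ i = 1 by omega) with rfl | rfl <;>
    rcases (show j = 0 ∨ j = 1 by omega) with rfl | rfl <;>
      simp [polyHessian, h00, h01, h10, h11]

lemma case2 {a : ℕ → ℝ} (hnn : ∀ k, k ≤ 2 → 0 ≤ a k) :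
    IsLorentzian 2 (F 2 a) ↔ ULC 2 a ∧ NIZ 2 a := by
  have hA : (!![2*a 2, a 1; a 1, 2*a 0] : Matrix (Fin 2) (Fin 2) ℝ).IsHermitian := by
    unfold Matrix.IsHermitian
    ext i j
    rcases (show i = 0 ∨ i = 1 by omega) with rfl | rfl <;>
      rcases (show j = 0 ∨ j = 1 by omega) with rfl | rfl <;>
        simp [Matrix.conjTranspose_apply]
  have htr : (0:ℝ) ≤ (!![2*a 2, a 1; a 1, 2*a 0] : Matrix (Fin 2) (Fin 2) ℝ).trace := by
    rw [Matrix.trace_fin_two_of]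
    have := hnn 0 (by norm_num)
    have := hnn 2 (by norm_num)
    linarith
  have hdet : (!![2*a 2, a 1; a 1, 2*a 0] : Matrix (Fin 2) (Fin 2) ℝ).det
      = 2*a 2 * (2*a 0) - a 1 * a 1 := Matrix.det_fin_two_of _ _ _ _
  show LorBase 2 (F 2 a) ∧ AtMostOnePosEig (polyHessian (F 2 a) 0) ↔ _
  rw [hess2, amope_iff hA htr, hdet]
  constructor
  · rintro ⟨hLB, hAM⟩
    have hN := lorBase_F_niz hnn hLB
    refine ⟨?_, hN⟩
    intro k hk0 hk2
    have hk : k = 1 := by omega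
    subst hk
    norm_num [Nat.choose]
    nlinarith
  · rintro ⟨hU, hN⟩
    refine ⟨lorBase_F hnn hN, ?_⟩
    have := hU 1 (by norm_num) (by norm_num)
    norm_num [Nat.choose] at this
    nlinarith

lemma main : ∀ D (a : ℕ → ℝ), (∀ k, k ≤ D → 0 ≤ a k) →
    (IsLorentzian D (F D a) ↔ ULC D a ∧ NIZ D a) := by
  intro D
  induction D using Nat.strong_induction_on with
  | _ D IH =>
  match D with
  | 0 =>
    intro a hnn
    constructor
    · intro _; exact ⟨ulc_trivial (by norm_num) a, niz_trivial (by norm_num) a⟩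
    · intro _; exact lorBase_F hnn (niz_trivial (by norm_num) a)
  | 1 =>
    intro a hnn
    constructor
    · intro _; exact ⟨ulc_trivial (by norm_num) a, niz_trivial (by norm_num) a⟩
    · intro _; exact lorBase_F hnn (niz_trivial (by norm_num) a)
  | 2 => intro a hnn; exact case2 hnn
  | (d+3) =>
    intro a hnn
    have hbnn : ∀ k, k ≤ d+2 → 0 ≤ ((k:ℝ)+1) * a (k+1) := fun k hk =>
      mul_nonneg (by positivity) (hnn (k+1) (by omega))
    have hcnn : ∀ k, k ≤ d+2 → 0 ≤ (((d+3:ℕ):ℝ) - k) * a k := by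
      intro k hk
      apply mul_nonneg _ (hnn k (by omega))
      have : (k:ℝ) ≤ ((d+3:ℕ):ℝ) := by exact_mod_cast (show k ≤ d+3 by omega)
      linarith
    have IHb := IH (d+2) (by omega) (fun k => ((k:ℝ)+1) * a (k+1)) hbnn
    have IHc := IH (d+2) (by omega) (fun k => (((d+3:ℕ):ℝ) - k) * a k) hcnn
    have hp0 : pderiv (0:Fin 2) (F (d+3) a) = F (d+2) (fun k => ((k:ℝ)+1) * a (k+1)) := by
      rw [pderiv0_F _ _ (by omega), show d+3-1 = d+2 by omega]
    have hp1 : pderiv (1:Fin 2) (F (d+3) a) = F (d+2) (fun k => (((d+3:ℕ):ℝ) - k) * a k) := by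
      rw [pderiv1_F _ _ (by omega), show d+3-1 = d+2 by omega]
    show LorBase (d+3) (F (d+3) a) ∧ (∀ i : Fin 2, IsLorentzian (d+2) (pderiv i (F (d+3) a))) ↔ _
    constructor
    · rintro ⟨hLB, hder⟩
      have hN := lorBase_F_niz hnn hLB
      have h0 := hder 0
      have h1 := hder 1
      rw [hp0] at h0
      rw [hp1] at h1
      have hb := IHb.1 h0
      have hc := IHc.1 h1
      exact ⟨ulc_of_bc (D := d+3) (by omega) hb.1 hc.1, hN⟩
    · rintro ⟨hU, hN⟩
      refine ⟨lorBase_F hnn hN, ?_⟩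
      intro i
      rcases (show i = 0 ∨ i = 1 by omega) with rfl | rfl
      · rw [hp0]
        exact IHb.2 ⟨ulc_to_b hU, niz_to_b hN⟩
      · rw [hp1]
        exact IHc.2 ⟨ulc_to_c hU, niz_to_c hN (by omega)⟩

theorem stmt5 {d : ℕ} (a : ℕ → ℝ) (hnn : ∀ k, k ≤ d → 0 ≤ a k) :
    IsLorentzian d
        (∑ k ∈ Finset.range (d + 1),
          (C (a k) * X 0 ^ k * X 1 ^ (d - k) : MvPolynomial (Fin 2) ℝ)) ↔
      ((∀ k, 0 < k → k < d →
          (a (k - 1) / (d.choose (k - 1) : ℝ)) * (a (k + 1) / (d.choose (k + 1) : ℝ)) ≤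
            (a k / (d.choose k : ℝ)) ^ 2) ∧
        (∀ k₁ k₂ k₃, k₁ < k₂ → k₂ < k₃ → k₃ ≤ d → 0 < a k₁ * a k₃ → 0 < a k₂)) :=
  main d a hnn
end

section
/- Let f be a degree 2 homogeneous polynomial wᵀAw where A is a symmetric n×n matrix with entries in {0,1}. Then f is Lorentzian (i.e. A has at most one positive eigenvalue) if and only if the support of f is M-convex. -/
open MvPolynomial Matrix

set_option linter.unusedSectionVars false
attribute [local instance] Classical.propDecidable

section Aux

variable {n : ℕ}

lemma atMostOne_of (M : Matrix (Fin n) (Fin n) ℝ) (hM : M.IsHermitian)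
    (v : Fin n → ℝ) (h : ∀ w : Fin n → ℝ, v ⬝ᵥ w = 0 → w ⬝ᵥ (M *ᵥ w) ≤ 0) :
    (Finset.univ.filter fun i => 0 < hM.eigenvalues i).card ≤ 1 := by
  by_contra hc
  push_neg at hc
  obtain ⟨i, hi, j, hj, hij⟩ := Finset.one_lt_card.mp hc
  simp only [Finset.mem_filter] at hi hj
  have hli : 0 < hM.eigenvalues i := hi.2
  have hlj : 0 < hM.eigenvalues j := hj.2
  set u : Fin n → ℝ := ⇑(hM.eigenvectorBasis i) with hu
  set u' : Fin n → ℝ := ⇑(hM.eigenvectorBasis j) with hu'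
  have horth := hM.eigenvectorBasis.orthonormal
  rw [orthonormal_iff_ite] at horth
  have hdot : ∀ k l, (⇑(hM.eigenvectorBasis k) : Fin n → ℝ) ⬝ᵥ ⇑(hM.eigenvectorBasis l)
      = if k = l then 1 else 0 := by
    intro k l
    have := horth k l
    rw [EuclideanSpace.inner_eq_star_dotProduct] at this
    rw [dotProduct_comm]
    simpa using this
  have huu : u ⬝ᵥ u = 1 := by simpa using hdot i i
  have huu' : u ⬝ᵥ u' = 0 := by simpa [hij] using hdot i j
  have hu'u : u' ⬝ᵥ u = 0 := by simpa [hij.symm] using hdot j i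
  have hu'u' : u' ⬝ᵥ u' = 1 := by simpa using hdot j j
  have hMu : M *ᵥ u = hM.eigenvalues i • u := hM.mulVec_eigenvectorBasis i
  have hMu' : M *ᵥ u' = hM.eigenvalues j • u' := hM.mulVec_eigenvectorBasis j
  by_cases ha : v ⬝ᵥ u = 0
  · have := h u ha
    rw [hMu, dotProduct_smul, huu] at this
    simp at this
    linarith
  · set w : Fin n → ℝ := (v ⬝ᵥ u') • u - (v ⬝ᵥ u) • u' with hw
    have hvw : v ⬝ᵥ w = 0 := by
      simp [hw, dotProduct_sub, dotProduct_smul]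
      ring
    have := h w hvw
    rw [hw] at this
    rw [mulVec_sub, mulVec_smul, mulVec_smul, hMu, hMu'] at this
    simp only [sub_dotProduct, dotProduct_sub, smul_dotProduct, dotProduct_smul, smul_eq_mul,
      huu, huu', hu'u, hu'u'] at this
    have h1 : 0 < (v ⬝ᵥ u) * (v ⬝ᵥ u) := by
      rcases lt_or_gt_of_ne ha with h' | h'
      · exact mul_pos_of_neg_of_neg h' h'
      · exact mul_pos h' h'
    nlinarith [mul_nonneg (mul_nonneg (mul_self_nonneg (v ⬝ᵥ u')) hli.le) (le_of_lt hli),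
      mul_pos h1 hlj, mul_nonneg (mul_self_nonneg (v ⬝ᵥ u')) hli.le]

lemma pair_cond {k l i j : Fin n} :
    Finsupp.single i 1 + Finsupp.single j 1 = Finsupp.single k 1 + Finsupp.single l 1 ↔
      (i = k ∧ j = l) ∨ (i = l ∧ j = k) := by
  rw [Finsupp.single_add_single_eq_single_add_single one_ne_zero one_ne_zero]
  simp

lemma sum_pair (g : Fin n → Fin n → ℝ) {k l : Fin n} (hkl : k ≠ l) :
    (∑ i, ∑ j, if (i = k ∧ j = l) ∨ (i = l ∧ j = k) then g i j else 0) = g k l + g l k := by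
  rw [← Finset.sum_product']
  have h1 : (Finset.univ ×ˢ Finset.univ : Finset (Fin n × Fin n)).filter
      (fun p => (p.1 = k ∧ p.2 = l) ∨ (p.1 = l ∧ p.2 = k)) = {(k, l), (l, k)} := by
    ext p
    simp [Prod.ext_iff]
  rw [← Finset.sum_filter, h1, Finset.sum_insert (by simp [hkl]), Finset.sum_singleton]

lemma sum_diag (g : Fin n → Fin n → ℝ) (k : Fin n) :
    (∑ i, ∑ j, if i = k ∧ j = k then g i j else 0) = g k k := by
  rw [← Finset.sum_product']
  have h1 : (Finset.univ ×ˢ Finset.univ : Finset (Fin n × Fin n)).filter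
      (fun p => p.1 = k ∧ p.2 = k) = {(k, k)} := by
    ext p; simp [Prod.ext_iff]
  rw [← Finset.sum_filter, h1, Finset.sum_singleton]

lemma coeff_formula (A : Matrix (Fin n) (Fin n) ℝ) (α : Fin n →₀ ℕ) :
    coeff α (∑ i, ∑ j, C (A i j) * X i * X j) =
      ∑ i, ∑ j, if Finsupp.single i 1 + Finsupp.single j 1 = α then A i j else 0 := by
  have key : ∀ (a : ℝ) (i j : Fin n), C a * X i * X j
      = monomial (Finsupp.single i 1 + Finsupp.single j 1) a := by
    intro a i j
    rw [mul_assoc, ← pow_one (X i), ← pow_one (X j), X_pow_eq_monomial, X_pow_eq_monomial,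
      monomial_mul, C_mul_monomial, mul_one, mul_one]
  simp only [coeff_sum, key, coeff_monomial]

lemma hess_eq (A : Matrix (Fin n) (Fin n) ℝ) (i j : Fin n) :
    polyHessian (∑ k, ∑ l, C (A k l) * X k * X l) 0 i j = A i j + A j i := by
  show eval 0 (pderiv i (pderiv j (∑ k, ∑ l, C (A k l) * X k * X l))) = A i j + A j i
  simp only [map_sum, pderiv_mul, pderiv_X, pderiv_C, eval_sum]
  simp only [Pi.single_apply]
  simp only [apply_ite, pderiv_mul, pderiv_X, pderiv_C, Pi.single_apply, map_add, _root_.map_mul,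
    map_zero, constantCoeff_X, constantCoeff_C, apply_ite constantCoeff]
  have step : ∀ (F : Fin n → Fin n → ℝ), (∑ x : Fin n, ∑ x_1 : Fin n,
      ((if x_1 = j ∧ x = i then F x x_1 else 0) + (if x_1 = i ∧ x = j then F x x_1 else 0)))
      = F i j + F j i := by
    intro F
    simp [Finset.sum_add_distrib, ite_and, Finset.sum_ite_eq, Finset.sum_ite_eq']
  by_cases hij : i = j
  · subst hij
    rw [← step (fun x x_1 => A x x_1)]
    apply Finset.sum_congr rfl; intro x _; apply Finset.sum_congr rfl; intro x1 _
    by_cases h1 : x1 = i <;> by_cases h2 : x = i <;> simp [h1, h2]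
  · rw [← step (fun x x_1 => A x x_1)]
    apply Finset.sum_congr rfl; intro x _; apply Finset.sum_congr rfl; intro x1 _
    by_cases h1 : x1 = i <;> by_cases h2 : x = i <;> by_cases h3 : x1 = j <;>
      by_cases h4 : x = j <;> simp_all

lemma sub_single (a b : Fin n) :
    (Finsupp.single a 1 + Finsupp.single b 1 : Fin n →₀ ℕ) - Finsupp.single b 1
      = Finsupp.single a 1 := by
  ext x
  simp only [Finsupp.tsub_apply, Finsupp.add_apply, Finsupp.single_apply]
  split_ifs <;> omega

end Aux

section Comb
variable {n : ℕ} (A : Matrix (Fin n) (Fin n) ℝ) (J : Set (Fin n →₀ ℕ))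
  (hsymm : ∀ i j, A i j = A j i)
  (h01 : ∀ i j, A i j = 0 ∨ A i j = 1)
  (hJ : MConvexSet J)
  (hpair : ∀ k l : Fin n, k ≠ l → ((Finsupp.single k 1 + Finsupp.single l 1) ∈ J ↔ A k l = 1))
  (hdiag : ∀ k : Fin n, ((Finsupp.single k 1 + Finsupp.single k 1) ∈ J ↔ A k k = 1))

include hsymm h01 hJ hpair hdiag

lemma combP1 {i j : Fin n} (hij : i ≠ j) (hi : A i i = 1) (hj : A j j = 1) : A i j = 1 := by
  obtain ⟨j', hlt, hmem⟩ := hJ _ ((hdiag i).2 hi) _ ((hdiag j).2 hj) i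
    (by simp [Finsupp.add_apply, Finsupp.single_apply, hij, (Ne.symm hij)])
  have hj' : j' = j := by
    by_contra h
    have : (Finsupp.single j 1 + Finsupp.single j 1 : Fin n →₀ ℕ) j' = 0 := by
      simp [Finsupp.add_apply, Finsupp.single_apply, Ne.symm h]
    omega
  rw [hj', sub_single, hpair i j hij] at hmem
  exact hmem

lemma combP2 {i j k : Fin n} (hji : j ≠ i) (hki : k ≠ i) (hjk : j ≠ k)
    (hi : A i i = 1) (hjk1 : A j k = 1) : A j i = 1 := by
  obtain ⟨j', hlt, hmem⟩ := hJ _ ((hpair j k hjk).2 hjk1) _ ((hdiag i).2 hi) k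
    (by simp [Finsupp.add_apply, Finsupp.single_apply, Ne.symm hki, Ne.symm hjk, hjk])
  have hj' : j' = i := by
    by_contra h
    have : (Finsupp.single i 1 + Finsupp.single i 1 : Fin n →₀ ℕ) j' = 0 := by
      simp [Finsupp.add_apply, Finsupp.single_apply, Ne.symm h]
    omega
  rw [hj', sub_single, hpair j i hji] at hmem
  exact hmem

lemma combP3 {i j k l : Fin n} (hik : i ≠ k) (hji : j ≠ i) (hjk : j ≠ k) (hjl : j ≠ l)
    (hli : l ≠ i) (hlk : l ≠ k)
    (hjl1 : A j l = 1) (hik1 : A i k = 1) : A j i = 1 ∨ A j k = 1 := by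
  obtain ⟨j', hlt, hmem⟩ := hJ _ ((hpair j l hjl).2 hjl1) _ ((hpair i k hik).2 hik1) l
    (by simp [Finsupp.add_apply, Finsupp.single_apply, Ne.symm hli, Ne.symm hlk, Ne.symm hjl])
  have hj' : j' = i ∨ j' = k := by
    by_contra h
    push_neg at h
    have : (Finsupp.single i 1 + Finsupp.single k 1 : Fin n →₀ ℕ) j' = 0 := by
      simp [Finsupp.add_apply, Finsupp.single_apply, Ne.symm h.1, Ne.symm h.2]
    omega
  have hjj' : j ≠ j' := by
    rcases hj' with h | h <;> subst h <;> assumption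
  rw [sub_single] at hmem
  rw [hpair j j' hjj'] at hmem
  rcases hj' with h | h <;> subst h
  · exact Or.inl hmem
  · exact Or.inr hmem

end Comb

section Quad
variable {n : ℕ}

noncomputable def Sprop (A : Matrix (Fin n) (Fin n) ℝ) (i : Fin n) : Prop := ∃ m, A i m = 1
noncomputable def Tprop (A : Matrix (Fin n) (Fin n) ℝ) (i : Fin n) : Prop := Sprop A i ∧ A i i = 0
noncomputable def Rrel (A : Matrix (Fin n) (Fin n) ℝ) (i j : Fin n) : Prop :=
  Tprop A i ∧ Tprop A j ∧ A i j = 0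

variable (A : Matrix (Fin n) (Fin n) ℝ) (J : Set (Fin n →₀ ℕ))
  (hsymm : ∀ i j, A i j = A j i)
  (h01 : ∀ i j, A i j = 0 ∨ A i j = 1)
  (hJ : MConvexSet J)
  (hpair : ∀ k l : Fin n, k ≠ l → ((Finsupp.single k 1 + Finsupp.single l 1) ∈ J ↔ A k l = 1))
  (hdiag : ∀ k : Fin n, ((Finsupp.single k 1 + Finsupp.single k 1) ∈ J ↔ A k k = 1))

include hsymm h01 hJ hpair hdiag

lemma loopAdj {i j : Fin n} (hi : A i i = 1) (hSj : Sprop A j) (hji : j ≠ i) : A i j = 1 := by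
  obtain ⟨m, hm⟩ := hSj
  by_cases hmj : m = j
  · subst hmj
    exact combP1 A J hsymm h01 hJ hpair hdiag (Ne.symm hji) hi hm
  · by_cases hmi : m = i
    · subst hmi
      rw [hsymm]; exact hm
    · rw [hsymm]
      exact combP2 A J hsymm h01 hJ hpair hdiag hji hmi (Ne.symm hmj) hi hm

lemma Rtrans {i j k : Fin n} (h1 : Rrel A i j) (h2 : Rrel A j k) : Rrel A i k := by
  obtain ⟨hTi, hTj, hij0⟩ := h1
  obtain ⟨_, hTk, hjk0⟩ := h2
  refine ⟨hTi, hTk, ?_⟩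
  by_cases hik : i = k
  · subst hik; exact hTi.2
  rcases h01 i k with h | h
  · exact h
  exfalso
  have hij : i ≠ j := by rintro rfl; rw [hjk0] at h; exact zero_ne_one h
  have hjk : j ≠ k := by rintro rfl; rw [hij0] at h; exact zero_ne_one h
  obtain ⟨l, hl⟩ := hTj.1
  by_cases hlj : l = j
  · subst hlj; rw [hTj.2] at hl; exact zero_ne_one hl
  by_cases hli : l = i
  · subst hli; rw [hsymm] at hl; rw [hij0] at hl; exact zero_ne_one hl
  by_cases hlk : l = k
  · subst hlk; rw [hjk0] at hl; exact zero_ne_one hl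
  rcases combP3 A J hsymm h01 hJ hpair hdiag hik (Ne.symm hij) hjk (Ne.symm hlj) hli hlk hl h
    with h' | h'
  · rw [hsymm] at hij0; rw [hij0] at h'; exact zero_ne_one h'
  · rw [hjk0] at h'; exact zero_ne_one h'

lemma matrix_id (i j : Fin n) :
    A i j = (if Sprop A i then (1:ℝ) else 0) * (if Sprop A j then 1 else 0)
      - (if Rrel A i j then 1 else 0) := by
  classical
  by_cases hSi : Sprop A i
  · by_cases hSj : Sprop A j
    · rcases h01 i j with h0 | h1
      · have hii : A i i = 0 := by
          rcases h01 i i with h | h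
          · exact h
          exfalso
          by_cases hij : i = j
          · subst hij; rw [h0] at h; exact zero_ne_one h
          · rw [loopAdj A J hsymm h01 hJ hpair hdiag h hSj (Ne.symm hij)] at h0
            exact one_ne_zero h0
        have hjj : A j j = 0 := by
          rcases h01 j j with h | h
          · exact h
          exfalso
          by_cases hij : i = j
          · subst hij; rw [h0] at h; exact zero_ne_one h
          · have := loopAdj A J hsymm h01 hJ hpair hdiag h hSi hij
            rw [← hsymm] at this; rw [this] at h0; exact one_ne_zero h0
        have : Rrel A i j := ⟨⟨hSi, hii⟩, ⟨hSj, hjj⟩, h0⟩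
        simp [this, hSi, hSj, h0]
      · have : ¬ Rrel A i j := by
          rintro ⟨-, -, h0⟩; rw [h0] at h1; exact zero_ne_one h1
        simp [this, hSi, hSj, h1]
    · have h0 : A i j = 0 := by
        rcases h01 i j with h | h
        · exact h
        · exact absurd ⟨i, by rw [← hsymm]; exact h⟩ hSj
      have : ¬ Rrel A i j := by rintro ⟨-, hT, -⟩; exact hSj hT.1
      simp [this, hSj, h0]
  · have h0 : A i j = 0 := by
      rcases h01 i j with h | h
      · exact h
      · exact absurd ⟨j, h⟩ hSi
    have : ¬ Rrel A i j := by rintro ⟨hT, -, -⟩; exact hSi hT.1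
    simp [this, hSi, h0]

lemma quad_nonpos (w : Fin n → ℝ)
    (hw : (fun i => if Sprop A i then (1:ℝ) else 0) ⬝ᵥ w = 0) :
    w ⬝ᵥ (A *ᵥ w) ≤ 0 := by
  classical
  have Rsymm : ∀ i j, Rrel A i j → Rrel A j i := by
    rintro i j ⟨a, b, c⟩; exact ⟨b, a, by rw [hsymm]; exact c⟩
  have Rtr : ∀ {i j k}, Rrel A i j → Rrel A j k → Rrel A i k :=
    fun h1 h2 => Rtrans A J hsymm h01 hJ hpair hdiag h1 h2
  have Rrefl : ∀ i, Tprop A i → Rrel A i i := fun i h => ⟨h, h, h.2⟩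
  have hne : ∀ i, Tprop A i → (Finset.univ.filter (Rrel A i)).Nonempty :=
    fun i h => ⟨i, by simp [Rrefl i h]⟩
  set r : Fin n → Fin n := fun i =>
    if h : Tprop A i then (Finset.univ.filter (Rrel A i)).min' (hne i h) else i with hr
  have hrR : ∀ i, Tprop A i → Rrel A i (r i) := by
    intro i h
    have : r i ∈ Finset.univ.filter (Rrel A i) := by
      rw [hr]; simp only [dif_pos h]; exact Finset.min'_mem _ _
    simpa using this
  have hrIff : ∀ i j, Tprop A i → Tprop A j → (Rrel A i j ↔ r i = r j) := by
    intro i j hi hj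
    constructor
    · intro hij
      have hset : Finset.univ.filter (Rrel A i) = Finset.univ.filter (Rrel A j) := by
        ext x
        simp only [Finset.mem_filter, Finset.mem_univ, true_and]
        exact ⟨fun h => Rtr (Rsymm i j hij) h, fun h => Rtr hij h⟩
      rw [hr]; simp only [dif_pos hi, dif_pos hj]
      congr 1
    · intro hrij
      have h1 := hrR i hi
      have h2 := hrR j hj
      rw [hrij] at h1
      exact Rtr h1 (Rsymm j _ h2)
  have expand : w ⬝ᵥ (A *ᵥ w) =
      ((fun i => if Sprop A i then (1:ℝ) else 0) ⬝ᵥ w)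
        * ((fun i => if Sprop A i then (1:ℝ) else 0) ⬝ᵥ w)
      - ∑ i, ∑ j, (if Rrel A i j then (1:ℝ) else 0) * (w i * w j) := by
    simp only [dotProduct, mulVec, dotProduct]
    rw [Finset.sum_mul_sum, ← Finset.sum_sub_distrib]
    apply Finset.sum_congr rfl; intro i _
    rw [Finset.mul_sum, ← Finset.sum_sub_distrib]
    apply Finset.sum_congr rfl; intro j _
    rw [matrix_id A J hsymm h01 hJ hpair hdiag i j]
    ring
  rw [expand, hw, zero_mul, zero_sub, neg_nonpos]
  set F : Fin n → ℝ := fun k => ∑ j, if Tprop A j ∧ r j = k then w j else 0 with hF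
  have step1 : (∑ i, ∑ j, (if Rrel A i j then (1:ℝ) else 0) * (w i * w j))
      = ∑ i, if Tprop A i then w i * F (r i) else 0 := by
    apply Finset.sum_congr rfl; intro i _
    by_cases hi : Tprop A i
    · rw [if_pos hi, hF]
      simp only
      rw [Finset.mul_sum]
      apply Finset.sum_congr rfl; intro j _
      by_cases hj : Tprop A j
      · by_cases hrij : r i = r j
        · rw [if_pos ((hrIff i j hi hj).2 hrij), if_pos ⟨hj, hrij.symm⟩]; ring
        · rw [if_neg (fun h => hrij ((hrIff i j hi hj).1 h)),
            if_neg (fun h => hrij (h.2.symm)), mul_zero, zero_mul]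
      · rw [if_neg (fun h : Rrel A i j => hj h.2.1), if_neg (fun h => hj h.1), mul_zero, zero_mul]
    · rw [if_neg hi]
      apply Finset.sum_eq_zero; intro j _
      rw [if_neg (fun h : Rrel A i j => hi h.1), zero_mul]
  have step2 : (∑ i, if Tprop A i then w i * F (r i) else 0) = ∑ k, F k * F k := by
    rw [← Finset.sum_filter]
    rw [← Finset.sum_fiberwise_of_maps_to (g := r) (t := Finset.univ)
      (fun x _ => Finset.mem_univ (r x))]
    apply Finset.sum_congr rfl; intro k _
    have hsum : ∑ i ∈ (Finset.univ.filter (Tprop A)).filter (fun i => r i = k), (w i * F (r i))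
        = ∑ i ∈ (Finset.univ.filter (Tprop A)).filter (fun i => r i = k), (w i * F k) := by
      apply Finset.sum_congr rfl; intro i hi
      simp only [Finset.mem_filter] at hi
      rw [hi.2]
    rw [hsum, ← Finset.sum_mul]
    congr 1
    rw [hF]
    simp only
    rw [Finset.sum_filter, Finset.sum_filter]
    apply Finset.sum_congr rfl; intro i _
    by_cases h : Tprop A i <;> by_cases h2 : r i = k <;> simp [h, h2]
  rw [step1, step2]
  apply Finset.sum_nonneg; intro k _
  exact mul_self_nonneg _

end Quad

theorem stmt9 {n : ℕ} (A : Matrix (Fin n) (Fin n) ℝ) (hsymm : A.IsSymm)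
    (h01 : ∀ i j, A i j = 0 ∨ A i j = 1)
    (f : MvPolynomial (Fin n) ℝ)
    (hfA : f = ∑ i, ∑ j, C (A i j) * X i * X j) :
    IsLorentzian 2 f ↔ MConvexSet {α : Fin n →₀ ℕ | f.coeff α ≠ 0} := by
  classical
  subst hfA
  set f : MvPolynomial (Fin n) ℝ := ∑ i, ∑ j, C (A i j) * X i * X j with hf
  have hsymm' : ∀ i j, A i j = A j i := fun i j => hsymm.apply j i
  set J : Set (Fin n →₀ ℕ) := {α | f.coeff α ≠ 0} with hJdef
  have hLor : IsLorentzian 2 f = (LorBase 2 f ∧ AtMostOnePosEig (polyHessian f 0)) := rfl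
  rw [hLor]
  constructor
  · rintro ⟨⟨-, -, hM⟩, -⟩
    exact hM
  · intro hM
    have hpair : ∀ k l : Fin n, k ≠ l →
        ((Finsupp.single k 1 + Finsupp.single l 1) ∈ J ↔ A k l = 1) := by
      intro k l hkl
      have hco : f.coeff (Finsupp.single k 1 + Finsupp.single l 1) = A k l + A l k := by
        rw [hf, coeff_formula]
        rw [show (∑ i, ∑ j, if Finsupp.single i 1 + Finsupp.single j 1
            = Finsupp.single k 1 + Finsupp.single l 1 then A i j else 0)
          = ∑ i, ∑ j, if (i = k ∧ j = l) ∨ (i = l ∧ j = k) then A i j else 0 from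
          Finset.sum_congr rfl fun i _ => Finset.sum_congr rfl fun j _ =>
            if_congr pair_cond rfl rfl]
        exact sum_pair (fun i j => A i j) hkl
      rw [hJdef]
      simp only [Set.mem_setOf_eq, hco]
      rw [← hsymm' k l]
      rcases h01 k l with h | h <;> rw [h] <;> norm_num
    have hdiag : ∀ k : Fin n, ((Finsupp.single k 1 + Finsupp.single k 1) ∈ J ↔ A k k = 1) := by
      intro k
      have hco : f.coeff (Finsupp.single k 1 + Finsupp.single k 1) = A k k := by
        rw [hf, coeff_formula]
        rw [show (∑ i, ∑ j, if Finsupp.single i 1 + Finsupp.single j 1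
            = Finsupp.single k 1 + Finsupp.single k 1 then A i j else 0)
          = ∑ i, ∑ j, if (i = k ∧ j = k) then A i j else 0 from
          Finset.sum_congr rfl fun i _ => Finset.sum_congr rfl fun j _ =>
            if_congr (by rw [pair_cond]; tauto) rfl rfl]
        exact sum_diag (fun i j => A i j) k
      rw [hJdef]
      simp only [Set.mem_setOf_eq, hco]
      rcases h01 k k with h | h <;> rw [h] <;> norm_num
    refine ⟨⟨?_, ?_, hM⟩, ?_⟩
    · rw [hf]
      apply MvPolynomial.IsHomogeneous.sum
      intro i _
      apply MvPolynomial.IsHomogeneous.sum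
      intro j _
      have : (0 : ℕ) + 1 + 1 = 2 := rfl
      rw [← this]
      exact ((isHomogeneous_C _ _).mul (isHomogeneous_X _ _)).mul (isHomogeneous_X _ _)
    · intro α
      rw [hf, coeff_formula]
      apply Finset.sum_nonneg; intro i _
      apply Finset.sum_nonneg; intro j _
      rcases h01 i j with h | h <;> split <;> simp [h]
    · -- AtMostOnePosEig
      have hHess : polyHessian f 0 = fun i j => A i j + A j i := by
        ext i j
        exact hess_eq A i j
      have hHerm : (polyHessian f 0).IsHermitian := by
        rw [hHess]
        ext i j
        show star (A j i + A i j) = A i j + A j i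
        simp [Matrix.conjTranspose_apply, hsymm' i j]
      refine ⟨hHerm, ?_⟩
      apply atMostOne_of _ hHerm (fun i => if Sprop A i then (1:ℝ) else 0)
      intro w hw
      have hq := quad_nonpos A J hsymm' h01 hM hpair hdiag w hw
      have : (polyHessian f 0) *ᵥ w = A *ᵥ w + A *ᵥ w := by
        rw [hHess]
        ext i
        simp only [mulVec, dotProduct, Pi.add_apply]
        rw [← Finset.sum_add_distrib]
        apply Finset.sum_congr rfl; intro j _
        rw [hsymm' i j]
        ring
      rw [this, dotProduct_add]
      linarith
end

section
/- Let A = (a_{ij}) be an n×n symmetric matrix with positive entries having exactly one positive eigenvalue, and let 0 ≤ p ≤ 1. Then the entrywise power matrix (a_{ij}^p) has exactly one positive eigenvalue. -/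
open Matrix

namespace Stmt10aux
open Finset Real MeasureTheory Set
variable {n : ℕ}

/-- quadratic form of a matrix -/
def qf (M : Matrix (Fin n) (Fin n) ℝ) (x : Fin n → ℝ) : ℝ := ∑ i, ∑ j, x i * x j * M i j

lemma qf_eq_dot (M : Matrix (Fin n) (Fin n) ℝ) (x : Fin n → ℝ) :
    qf M x = x ⬝ᵥ M *ᵥ x := by
  unfold qf dotProduct mulVec dotProduct
  refine Finset.sum_congr rfl fun i _ => ?_
  rw [Finset.mul_sum]
  exact Finset.sum_congr rfl fun j _ => by ring

/-- Gram matrices -/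
def IsGram (M : Matrix (Fin n) (Fin n) ℝ) : Prop :=
  ∃ (κ : Type) (_ : Fintype κ) (B : κ → Fin n → ℝ),
    M = Matrix.of fun i j => ∑ k, B k i * B k j

lemma qf_gram {κ : Type*} [Fintype κ] (B : κ → Fin n → ℝ) (x : Fin n → ℝ) :
    qf (Matrix.of fun i j => ∑ k, B k i * B k j) x = ∑ k, (∑ i, x i * B k i) ^ 2 := by
  unfold qf
  simp only [Matrix.of_apply, Finset.mul_sum]
  have h1 : ∀ i, ∑ j, ∑ k : κ, x i * x j * (B k i * B k j)
      = ∑ k : κ, ∑ j, (x i * B k i) * (x j * B k j) := fun i => by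
    rw [Finset.sum_comm]
    exact Finset.sum_congr rfl fun k _ => Finset.sum_congr rfl fun j _ => by ring
  simp_rw [h1]
  rw [Finset.sum_comm]
  refine Finset.sum_congr rfl fun k _ => ?_
  rw [sq, Finset.sum_mul_sum]

lemma IsGram.qf_nonneg {M : Matrix (Fin n) (Fin n) ℝ} (h : IsGram M) (x : Fin n → ℝ) :
    0 ≤ qf M x := by
  obtain ⟨κ, _, B, rfl⟩ := h
  rw [qf_gram]
  exact Finset.sum_nonneg fun k _ => sq_nonneg _

lemma IsGram.hadamard {M N : Matrix (Fin n) (Fin n) ℝ} (hM : IsGram M) (hN : IsGram N) :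
    IsGram (Matrix.of fun i j => M i j * N i j) := by
  obtain ⟨κ, _, B, rfl⟩ := hM
  obtain ⟨κ', _, C, rfl⟩ := hN
  refine ⟨κ × κ', inferInstance, fun k i => B k.1 i * C k.2 i, ?_⟩
  ext i j
  simp only [Matrix.of_apply, Fintype.sum_prod_type]
  rw [Finset.sum_mul_sum]
  exact Finset.sum_congr rfl fun k _ => Finset.sum_congr rfl fun l _ => by ring

lemma IsGram.hadamard_pow {M : Matrix (Fin n) (Fin n) ℝ} (hM : IsGram M) (m : ℕ) :
    IsGram (Matrix.of fun i j => M i j ^ m) := by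
  induction m with
  | zero =>
    refine ⟨Unit, inferInstance, fun _ _ => 1, ?_⟩
    ext i j; simp
  | succ m ih =>
    have := hM.hadamard ih
    simp only [Matrix.of_apply] at this ⊢
    convert this using 2
    ext i j
    ring

lemma IsGram.qf_exp_nonneg {M : Matrix (Fin n) (Fin n) ℝ} (hM : IsGram M) (x : Fin n → ℝ) :
    0 ≤ qf (Matrix.of fun i j => Real.exp (M i j)) x := by
  have qf2 : ∀ (N : Matrix (Fin n) (Fin n) ℝ),
      qf N x = ∑ q : Fin n × Fin n, x q.1 * x q.2 * N q.1 q.2 := by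
    intro N; rw [qf, ← Fintype.sum_prod_type']
  rw [qf2]
  have hexp : ∀ (c : ℝ), Real.exp c = ∑' m : ℕ, c ^ m / m.factorial := by
    intro c
    rw [Real.exp_eq_exp_ℝ, NormedSpace.exp_eq_tsum_div]
  have hsumm : ∀ (q : Fin n × Fin n),
      Summable (fun m : ℕ => x q.1 * x q.2 * (M q.1 q.2 ^ m / m.factorial)) := by
    intro q
    exact (Real.summable_pow_div_factorial _).mul_left _
  calc (0:ℝ) ≤ ∑' m : ℕ, ∑ q : Fin n × Fin n, x q.1 * x q.2 * (M q.1 q.2 ^ m / m.factorial) := by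
        refine tsum_nonneg fun m => ?_
        have h1 := (hM.hadamard_pow m).qf_nonneg x
        rw [qf2] at h1
        have : ∑ q : Fin n × Fin n, x q.1 * x q.2 * (M q.1 q.2 ^ m / m.factorial)
            = (1 / m.factorial) * ∑ q : Fin n × Fin n, x q.1 * x q.2 * (M q.1 q.2 ^ m) := by
          rw [Finset.mul_sum]
          exact Finset.sum_congr rfl fun q _ => by ring
        rw [this]
        apply mul_nonneg (by positivity)
        simpa using h1
    _ = ∑ q : Fin n × Fin n, ∑' m : ℕ, x q.1 * x q.2 * (M q.1 q.2 ^ m / m.factorial) := by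
        rw [Summable.tsum_finsetSum (fun q _ => hsumm q)]
    _ = ∑ q : Fin n × Fin n, x q.1 * x q.2 * Real.exp (M q.1 q.2) := by
        refine Finset.sum_congr rfl fun q _ => ?_
        rw [hexp, ← tsum_mul_left]
    _ = ∑ q : Fin n × Fin n, x q.1 * x q.2 * (Matrix.of fun i j => Real.exp (M i j)) q.1 q.2 := rfl


/-- conditional negative semidefiniteness -/
def CND (M : Matrix (Fin n) (Fin n) ℝ) : Prop :=
  ∀ x : Fin n → ℝ, ∑ i, x i = 0 → qf M x ≤ 0

lemma isGram_of_qf_nonneg {K : Matrix (Fin n) (Fin n) ℝ} (hsym : ∀ i j, K i j = K j i)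
    (hpos : ∀ y, 0 ≤ qf K y) : IsGram K := by
  have hherm : K.IsHermitian := by
    ext i j
    simp only [conjTranspose_apply, star_trivial]
    exact hsym j i
  have hps : K.PosSemidef := by
    refine .of_dotProduct_mulVec_nonneg hherm fun y => ?_
    rw [star_trivial, ← qf_eq_dot]
    exact hpos y
  obtain ⟨m, B, hB⟩ := Matrix.posSemidef_iff_eq_sum_vecMulVec.mp hps
  refine ⟨Fin m, inferInstance, fun k i => B k i, ?_⟩
  ext i j
  simp [hB, Matrix.sum_apply, Matrix.vecMulVec_apply]

lemma schoenberg {M : Matrix (Fin n) (Fin n) ℝ} (hsym : ∀ i j, M i j = M j i)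
    (hM : CND M) (x : Fin n → ℝ) :
    0 ≤ qf (Matrix.of fun i j => Real.exp (-M i j)) x := by
  rcases Nat.eq_zero_or_pos n with hn | hn
  · subst hn; simp [qf]
  set i0 : Fin n := ⟨0, hn⟩
  set K : Matrix (Fin n) (Fin n) ℝ :=
    Matrix.of (fun i j => M i i0 + M i0 j - M i j - M i0 i0) with hK
  have hKsym : ∀ i j, K i j = K j i := by
    intro i j
    simp only [hK, Matrix.of_apply]
    rw [hsym i i0, hsym i0 j, hsym i j]
    ring
  have hKpos : ∀ y, 0 ≤ qf K y := by
    intro y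
    set s : ℝ := ∑ i, y i with hs
    set y' : Fin n → ℝ := fun i => y i - (if i = i0 then s else 0) with hy'
    have hsum : ∑ i, y' i = 0 := by
      simp only [hy', Finset.sum_sub_distrib, Finset.sum_ite_eq' Finset.univ i0 (fun _ => s),
        Finset.mem_univ, if_true, ← hs, sub_self]
    have h1 : qf M y' ≤ 0 := hM y' hsum
    have e1 : ∀ (c : Fin n → ℝ), ∑ i, ∑ j, y i * y j * c i = s * ∑ i, y i * c i := by
      intro c
      have h : ∀ i, ∑ j, y i * y j * c i = (y i * c i) * s := by
        intro i
        rw [hs, Finset.mul_sum]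
        exact Finset.sum_congr rfl fun j _ => by ring
      simp_rw [h]
      rw [← Finset.sum_mul, mul_comm]
    have e2 : ∀ (d : Fin n → ℝ), ∑ i, ∑ j, y i * y j * d j = s * ∑ j, y j * d j := by
      intro d
      have h : ∀ i, ∑ j, y i * y j * d j = y i * ∑ j, y j * d j := by
        intro i
        rw [Finset.mul_sum]
        exact Finset.sum_congr rfl fun j _ => by ring
      simp_rw [h]
      rw [← Finset.sum_mul, ← hs]
    have collapse1 : ∀ (f : Fin n → Fin n → ℝ),
        (∑ i, ∑ j, if i = i0 then f i j else 0) = ∑ j, f i0 j := by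
      intro f
      have h : ∀ i, (∑ j, if i = i0 then f i j else 0) = if i = i0 then ∑ j, f i j else 0 := by
        intro i; split <;> simp
      simp_rw [h]
      simp
    have collapse2 : ∀ (f : Fin n → Fin n → ℝ),
        (∑ i, ∑ j, if j = i0 then f i j else 0) = ∑ i, f i i0 := by
      intro f
      refine Finset.sum_congr rfl fun i _ => ?_
      simp
    have hy'qf : qf M y' = qf M y - s * (∑ j, y j * M i0 j) - s * (∑ i, y i * M i i0)
        + s * s * M i0 i0 := by
      unfold qf
      have expand : ∀ i j, y' i * y' j * M i j
          = y i * y j * M i j - (if i = i0 then s * y j * M i j else 0)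
            - (if j = i0 then y i * s * M i j else 0)
            + (if i = i0 then (if j = i0 then s * s * M i j else 0) else 0) := by
        intro i j
        simp only [hy']
        by_cases h1 : i = i0 <;> by_cases h2 : j = i0 <;> simp [h1, h2] <;> ring
      simp_rw [expand, Finset.sum_add_distrib, Finset.sum_sub_distrib, collapse1, collapse2]
      simp only [Finset.sum_ite_eq' Finset.univ i0, Finset.mem_univ, if_true]
      have r1 : ∑ j, s * y j * M i0 j = s * ∑ j, y j * M i0 j := by
        rw [Finset.mul_sum]
        exact Finset.sum_congr rfl fun j _ => by ring
      have r2 : ∑ i, y i * s * M i i0 = s * ∑ i, y i * M i i0 := by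
        rw [Finset.mul_sum]
        exact Finset.sum_congr rfl fun i _ => by ring
      rw [r1, r2]
    have hKval : qf K y = s * (∑ i, y i * M i i0) + s * (∑ j, y j * M i0 j)
        - qf M y - s * s * M i0 i0 := by
      unfold qf
      have expand : ∀ i j, y i * y j * K i j
          = y i * y j * M i i0 + y i * y j * M i0 j - y i * y j * M i j
            - y i * y j * M i0 i0 := by
        intro i j
        simp only [hK, Matrix.of_apply]
        ring
      simp_rw [expand]
      simp only [Finset.sum_add_distrib, Finset.sum_sub_distrib]
      rw [e1 (fun i => M i i0), e2 (fun j => M i0 j), e1 (fun _ => M i0 i0)]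
      have e4 : ∑ i, y i * M i0 i0 = s * M i0 i0 := by
        rw [hs, ← Finset.sum_mul]
      rw [e4]
      ring
    linarith
  -- main part of Schoenberg
  have hGram : IsGram K := isGram_of_qf_nonneg hKsym hKpos
  set d : Fin n → ℝ := fun i => Real.exp (-M i i0 + M i0 i0 / 2) with hd
  have claim : ∀ i j, Real.exp (-M i j) = d i * d j * Real.exp (K i j) := by
    intro i j
    simp only [hd, hK, Matrix.of_apply, ← Real.exp_add]
    congr 1
    rw [hsym j i0]
    ring
  have h0 := hGram.qf_exp_nonneg (fun i => x i * d i)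
  have heq : qf (Matrix.of fun i j => Real.exp (-M i j)) x
      = qf (Matrix.of fun i j => Real.exp (K i j)) (fun i => x i * d i) := by
    unfold qf
    refine Finset.sum_congr rfl fun i _ => Finset.sum_congr rfl fun j _ => ?_
    simp only [Matrix.of_apply, claim i j]
    ring
  rw [heq]
  exact h0

lemma qf_eigen {A : Matrix (Fin n) (Fin n) ℝ} (hA : A.IsHermitian) (x : Fin n → ℝ) :
    qf A x = ∑ k, hA.eigenvalues k * (∑ i, x i * hA.eigenvectorBasis k i) ^ 2 := by
  set U : Matrix (Fin n) (Fin n) ℝ := (hA.eigenvectorUnitary : Matrix (Fin n) (Fin n) ℝ) with hU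
  set z : Fin n → ℝ := fun k => ∑ i, x i * hA.eigenvectorBasis k i with hzdef
  have hz : (star U) *ᵥ x = z := by
    funext k
    show ∑ i, (star U) k i * x i = ∑ i, x i * hA.eigenvectorBasis k i
    refine Finset.sum_congr rfl fun i _ => ?_
    show star (U i k) * x i = _
    rw [star_trivial, mul_comm]
    rfl
  have hxU : x ᵥ* U = z := by
    funext k
    rfl
  rw [qf_eq_dot]
  conv_lhs => rw [hA.spectral_theorem, Unitary.conjStarAlgAut_apply]
  rw [← Matrix.mulVec_mulVec, ← Matrix.mulVec_mulVec, Matrix.dotProduct_mulVec, hxU, hz]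
  simp only [Matrix.mulVec_diagonal, dotProduct, Function.comp_apply]
  refine Finset.sum_congr rfl fun k _ => ?_
  simp only [RCLike.ofReal_real_eq_id, id_eq]
  ring

lemma ortho {A : Matrix (Fin n) (Fin n) ℝ} (hA : A.IsHermitian) (k l : Fin n) :
    ∑ i, hA.eigenvectorBasis k i * hA.eigenvectorBasis l i = if k = l then 1 else 0 := by
  have h := Unitary.coe_star_mul_self (hA.eigenvectorUnitary)
  have h2 := congrFun (congrFun (congrArg (fun (M : Matrix (Fin n) (Fin n) ℝ) => M) h) k) l
  simp only [Matrix.mul_apply, Matrix.star_apply, star_trivial,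
    IsHermitian.eigenvectorUnitary_apply, Matrix.one_apply] at h2
  exact h2

/-- A symmetric matrix with positive diagonal which is ≤0 on a hyperplane has exactly one
positive eigenvalue. -/
lemma count_lemma {M : Matrix (Fin n) (Fin n) ℝ} (hM : M.IsHermitian) (hn : 0 < n)
    (hdiag : ∀ i, 0 < M i i) (w : Fin n → ℝ)
    (hw : ∀ x, ∑ i, x i * w i = 0 → qf M x ≤ 0) :
    (Finset.univ.filter fun i => 0 < hM.eigenvalues i).card = 1 := by
  set b := hM.eigenvectorBasis with hb
  -- at least one positive eigenvalue
  have hex : ∃ k, 0 < hM.eigenvalues k := by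
    by_contra h
    push_neg at h
    set i1 : Fin n := ⟨0, hn⟩
    have h1 : qf M (fun i => if i = i1 then 1 else 0) = M i1 i1 := by
      unfold qf
      have expand : ∀ i j : Fin n, (if i = i1 then (1:ℝ) else 0) * (if j = i1 then 1 else 0) * M i j
          = if i = i1 then (if j = i1 then M i j else 0) else 0 := by
        intro i j
        by_cases h1 : i = i1 <;> by_cases h2 : j = i1 <;> simp [h1, h2]
      simp_rw [expand]
      have col : ∀ i : Fin n, (∑ j, if i = i1 then (if j = i1 then M i j else 0) else 0)
          = if i = i1 then M i i1 else 0 := by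
        intro i; split <;> simp
      simp_rw [col]
      simp
    have h2 : qf M (fun i => if i = i1 then 1 else 0) ≤ 0 := by
      rw [qf_eigen hM]
      exact Finset.sum_nonpos fun k _ => mul_nonpos_of_nonpos_of_nonneg (h k) (sq_nonneg _)
    rw [h1] at h2
    exact absurd (hdiag i1) (not_lt.mpr h2)
  -- at most one positive eigenvalue
  have huniq : ∀ k l, 0 < hM.eigenvalues k → 0 < hM.eigenvalues l → k = l := by
    intro k l hk hl
    by_contra hne
    -- coefficients of a vector in the eigenbasis
    have coeff : ∀ (sl sk : ℝ) (m : Fin n),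
        ∑ i, (sl * b k i - sk * b l i) * b m i
          = sl * (if k = m then 1 else 0) - sk * (if l = m then 1 else 0) := by
      intro sl sk m
      rw [← ortho hM k m, ← ortho hM l m, Finset.mul_sum, Finset.mul_sum,
        ← Finset.sum_sub_distrib]
      exact Finset.sum_congr rfl fun i _ => by ring
    set sk := ∑ i, b k i * w i with hskdef
    set sl := ∑ i, b l i * w i with hsldef
    set x : Fin n → ℝ := fun i => sl * b k i - sk * b l i with hx
    have hconstraint : ∑ i, x i * w i = 0 := by
      simp only [hx, sub_mul, Finset.sum_sub_distrib, mul_assoc, ← Finset.mul_sum]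
      rw [← hskdef, ← hsldef]
      ring
    have hqf : qf M x = hM.eigenvalues k * sl ^ 2 + hM.eigenvalues l * sk ^ 2 := by
      rw [qf_eigen hM]
      have key : ∀ m, hM.eigenvalues m * (∑ i, x i * b m i) ^ 2
          = hM.eigenvalues k * sl ^ 2 * (if k = m then 1 else 0)
            + hM.eigenvalues l * sk ^ 2 * (if l = m then 1 else 0) := by
        intro m
        rw [hx, coeff sl sk m]
        by_cases h1 : k = m
        · subst h1
          have h2 : ¬ l = k := fun h => hne h.symm
          simp [h2]
        · by_cases h2 : l = m
          · subst h2
            simp [h1]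
          · simp [h1, h2]
      simp_rw [← hb, key]
      rw [Finset.sum_add_distrib]
      simp [Finset.sum_ite_eq]
    -- now a case analysis on whether sk = 0
    by_cases hsk : sk = 0
    · -- use x = b k directly
      have hc : ∑ i, b k i * w i = 0 := by rw [← hskdef]; exact hsk
      have h3 := hw (fun i => b k i) hc
      have h4 : qf M (fun i => b k i) = hM.eigenvalues k := by
        rw [qf_eigen hM]
        have key : ∀ m, hM.eigenvalues m * (∑ i, b k i * b m i) ^ 2
            = hM.eigenvalues k * (if k = m then 1 else 0) := by
          intro m
          rw [ortho hM k m]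
          by_cases h1 : k = m
          · subst h1; simp
          · simp [h1]
        simp_rw [← hb, key]
        simp [Finset.sum_ite_eq]
      rw [h4] at h3
      exact absurd hk (not_lt.mpr h3)
    · have h3 := hw x hconstraint
      rw [hqf] at h3
      have : 0 < hM.eigenvalues k * sl ^ 2 + hM.eigenvalues l * sk ^ 2 := by
        have hsq : 0 < sk ^ 2 := lt_of_le_of_ne (sq_nonneg sk) (Ne.symm (pow_ne_zero 2 hsk))
        have t1 : 0 ≤ hM.eigenvalues k * sl ^ 2 := mul_nonneg hk.le (sq_nonneg _)
        have t2 : 0 < hM.eigenvalues l * sk ^ 2 := mul_pos hl hsq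
        linarith
      linarith
  obtain ⟨k, hk⟩ := hex
  rw [Finset.card_eq_one]
  refine ⟨k, ?_⟩
  ext l
  simp only [Finset.mem_filter, Finset.mem_univ, true_and, Finset.mem_singleton]
  exact ⟨fun h => huniq l k h hk, fun h => h ▸ hk⟩


/-- Perron: positive entries + exactly one positive eigenvalue gives a positive eigenvector
whose orthogonal complement is where the quadratic form is nonpositive. -/
lemma perron {A : Matrix (Fin n) (Fin n) ℝ} (hA : A.IsHermitian)
    (hpos : ∀ i j, 0 < A i j) (hn : 0 < n)
    (hone : (Finset.univ.filter fun i => 0 < hA.eigenvalues i).card = 1) :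
    ∃ (v : Fin n → ℝ) (lam : ℝ), 0 < lam ∧ (∀ i, 0 < v i) ∧ (A *ᵥ v = lam • v) ∧
      (∀ x, ∑ i, x i * v i = 0 → qf A x ≤ 0) := by
  obtain ⟨k0, hk0⟩ := Finset.card_eq_one.mp hone
  have hmem : 0 < hA.eigenvalues k0 := by
    have : k0 ∈ Finset.univ.filter fun i => 0 < hA.eigenvalues i := by
      rw [hk0]; exact Finset.mem_singleton_self k0
    exact (Finset.mem_filter.mp this).2
  have hle : ∀ m, m ≠ k0 → hA.eigenvalues m ≤ 0 := by
    intro m hm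
    by_contra h
    push_neg at h
    have : m ∈ Finset.univ.filter fun i => 0 < hA.eigenvalues i :=
      Finset.mem_filter.mpr ⟨Finset.mem_univ m, h⟩
    rw [hk0, Finset.mem_singleton] at this
    exact hm this
  set lam := hA.eigenvalues k0 with hlamdef
  set u : Fin n → ℝ := fun i => hA.eigenvectorBasis k0 i with hu
  have hQ : ∀ x, (∑ i, x i * u i) = 0 → qf A x ≤ 0 := by
    intro x hx
    rw [qf_eigen hA]
    refine Finset.sum_nonpos fun m _ => ?_
    by_cases hm : m = k0
    · subst hm
      have hx' : ∑ i, x i * hA.eigenvectorBasis m i = 0 := hx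
      rw [hx']
      simp
    · exact mul_nonpos_of_nonpos_of_nonneg (hle m hm) (sq_nonneg _)
  have hAu : A *ᵥ u = lam • u := hA.mulVec_eigenvectorBasis k0
  have hnorm : ∑ i, u i * u i = 1 := by
    have := ortho hA k0 k0
    simpa using this
  set v : Fin n → ℝ := fun i => |u i| with hv
  have hvnorm : ∑ i, v i * v i = 1 := by
    rw [← hnorm]
    exact Finset.sum_congr rfl fun i _ => by rw [hv, abs_mul_abs_self]
  have hlamqf : qf A u = lam := by
    rw [qf_eq_dot, hAu]
    simp only [dotProduct, Pi.smul_apply, smul_eq_mul]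
    have : ∀ i, u i * (lam * u i) = lam * (u i * u i) := fun i => by ring
    simp_rw [this, ← Finset.mul_sum, hnorm, mul_one]
  have hmono : qf A u ≤ qf A v := by
    unfold qf
    refine Finset.sum_le_sum fun i _ => Finset.sum_le_sum fun j _ => ?_
    have h1 : u i * u j ≤ |u i * u j| := le_abs_self _
    rw [abs_mul] at h1
    exact mul_le_mul_of_nonneg_right (by rw [hv]; exact h1) (hpos i j).le
  set c : ℝ := ∑ i, v i * u i with hc
  set x : Fin n → ℝ := fun i => v i - c * u i with hx
  have hxu : ∑ i, x i * u i = 0 := by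
    simp only [hx, sub_mul, Finset.sum_sub_distrib, mul_assoc, ← Finset.mul_sum]
    rw [← hc, hnorm, mul_one, sub_self]
  -- cross term vanishes: ∑ i, ∑ j, x i * u j * A i j = 0 and symmetric
  have hsym : ∀ i j, A i j = A j i := by
    intro i j
    have := congrFun (congrFun hA j) i
    simpa [Matrix.conjTranspose_apply] using this
  have cross1 : ∑ i, ∑ j, x i * (c * u j) * A i j = 0 := by
    have inner : ∀ i, ∑ j, x i * (c * u j) * A i j = c * x i * (lam * u i) := by
      intro i
      have hrow : ∑ j, A i j * u j = lam * u i := by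
        have := congrFun hAu i
        simpa [Matrix.mulVec, dotProduct] using this
      rw [← hrow, Finset.mul_sum]
      exact Finset.sum_congr rfl fun j _ => by ring
    simp_rw [inner]
    have : ∀ i, c * x i * (lam * u i) = (c * lam) * (x i * u i) := fun i => by ring
    simp_rw [this, ← Finset.mul_sum, hxu, mul_zero]
  have cross2 : ∑ i, ∑ j, (c * u i) * x j * A i j = 0 := by
    rw [Finset.sum_comm]
    have : ∀ j i, c * u i * x j * A i j = x j * (c * u i) * A j i := by
      intro j i; rw [hsym i j]; ring
    simp_rw [this]
    exact cross1
  have hdecomp : qf A v = qf A x + c * c * lam := by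
    have expand : ∀ i j, v i * v j * A i j
        = x i * x j * A i j + x i * (c * u j) * A i j + (c * u i) * x j * A i j
          + (c * u i) * (c * u j) * A i j := by
      intro i j
      have hvi : v i = x i + c * u i := by rw [hx]; ring
      have hvj : v j = x j + c * u j := by rw [hx]; ring
      rw [hvi, hvj]; ring
    unfold qf
    simp_rw [expand, Finset.sum_add_distrib]
    rw [cross1, cross2, add_zero, add_zero]
    congr 1
    have huu : ∑ i, ∑ j, (c * u i) * (c * u j) * A i j = c * c * qf A u := by
      unfold qf
      rw [Finset.mul_sum]
      refine Finset.sum_congr rfl fun i _ => ?_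
      rw [Finset.mul_sum]
      exact Finset.sum_congr rfl fun j _ => by ring
    rw [huu, hlamqf]
  have hxqf : qf A x ≤ 0 := hQ x hxu
  -- Cauchy-Schwarz : c ^ 2 ≤ 1
  have hcs : c ^ 2 ≤ 1 := by
    have h := Finset.sum_mul_sq_le_sq_mul_sq Finset.univ v u
    have h1 : ∑ i, v i ^ 2 = 1 := by
      rw [← hvnorm]; exact Finset.sum_congr rfl fun i _ => by rw [sq]
    have h2 : ∑ i, u i ^ 2 = 1 := by
      rw [← hnorm]; exact Finset.sum_congr rfl fun i _ => by rw [sq]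
    rw [h1, h2, one_mul, ← hc] at h
    exact h
  have hc2 : 1 ≤ c ^ 2 := by
    nlinarith [hmono, hdecomp, hxqf, hlamqf, hmem]
  have hceq : c ^ 2 = 1 := le_antisymm hcs hc2
  -- x = 0
  have hsumsq : ∑ i, x i * x i = 0 := by
    have expand : ∀ i, x i * x i = v i * v i - 2 * c * (v i * u i) + c * c * (u i * u i) := by
      intro i; simp only [hx]; ring
    simp_rw [expand]
    rw [Finset.sum_add_distrib, Finset.sum_sub_distrib, ← Finset.mul_sum, ← Finset.mul_sum,
      hvnorm, ← hc, hnorm]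
    nlinarith [hceq]
  have hxzero : ∀ i, x i = 0 := by
    intro i
    have h := (Finset.sum_eq_zero_iff_of_nonneg
      (fun j (_ : j ∈ Finset.univ) => mul_self_nonneg (x j))).mp hsumsq i (Finset.mem_univ i)
    exact mul_self_eq_zero.mp h
  have hveq : ∀ i, v i = c * u i := by
    intro i
    have h := hxzero i
    simp only [hx] at h
    linarith
  have hAv : A *ᵥ v = lam • v := by
    funext i
    show ∑ j, A i j * v j = lam * v i
    have hrow : ∑ j, A i j * u j = lam * u i := by
      have := congrFun hAu i
      simpa [Matrix.mulVec, dotProduct] using this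
    calc ∑ j, A i j * v j = ∑ j, c * (A i j * u j) := by
          refine Finset.sum_congr rfl fun j _ => ?_
          rw [hveq j]; ring
      _ = c * (lam * u i) := by rw [← Finset.mul_sum, hrow]
      _ = lam * v i := by rw [hveq i]; ring
  have hvnonneg : ∀ i, 0 ≤ v i := fun i => abs_nonneg (u i)
  have hvex : ∃ j, 0 < v j := by
    by_contra h
    push_neg at h
    have : ∀ j, v j = 0 := fun j => le_antisymm (h j) (hvnonneg j)
    have : ∑ i, v i * v i = 0 := Finset.sum_eq_zero fun i _ => by rw [this i, mul_zero]
    rw [hvnorm] at this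
    exact one_ne_zero this
  obtain ⟨j0, hj0⟩ := hvex
  have hvpos : ∀ i, 0 < v i := by
    intro i
    have hlv : 0 < lam * v i := by
      have h2 : ∑ j, A i j * v j = lam * v i := by
        have := congrFun hAv i
        simpa [Matrix.mulVec, dotProduct] using this
      rw [← h2]
      exact Finset.sum_pos' (fun j _ => mul_nonneg (hpos i j).le (hvnonneg j))
        ⟨j0, Finset.mem_univ j0, mul_pos (hpos i j0) hj0⟩
    rcases mul_pos_iff.mp hlv with ⟨_, h⟩ | ⟨h, _⟩
    · exact h
    · exact absurd hmem (not_lt.mpr h.le)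
  refine ⟨v, lam, hmem, hvpos, hAv, ?_⟩
  intro x0 hx0
  have hcne : c ≠ 0 := by
    intro h
    rw [h] at hceq
    norm_num at hceq
  apply hQ
  have : ∑ i, x0 i * v i = c * ∑ i, x0 i * u i := by
    rw [Finset.mul_sum]
    refine Finset.sum_congr rfl fun i _ => ?_
    rw [hveq i]; ring
  rw [this] at hx0
  exact (mul_eq_zero.mp hx0).resolve_left hcne

section analysis
variable {p : ℝ}

/-- integrability of the Bernstein integrand -/
lemma bernstein_integrable (hp0 : 0 < p) (hp1 : p < 1) {c : ℝ} (hc : 0 < c) :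
    IntegrableOn (fun t => (1 - Real.exp (-(t * c))) * t ^ (-p - 1)) (Ioi (0:ℝ)) := by
  have hmeas : ∀ (s : Set ℝ), s ⊆ Ioi 0 → MeasurableSet s →
      AEStronglyMeasurable (fun t => (1 - Real.exp (-(t * c))) * t ^ (-p - 1))
        (volume.restrict s) := by
    intro s hs hsm
    apply ContinuousOn.aestronglyMeasurable ?_ hsm
    apply ContinuousOn.mul
    · exact (continuous_const.sub ((continuous_id.mul continuous_const).neg.rexp)).continuousOn
    · exact ContinuousOn.rpow_const continuousOn_id
        (fun t ht => Or.inl (ne_of_gt (hs ht)))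
  have hbound : ∀ t : ℝ, 0 < t → 0 ≤ 1 - Real.exp (-(t * c)) ∧ 1 - Real.exp (-(t * c)) ≤ t * c := by
    intro t ht
    constructor
    · have : Real.exp (-(t * c)) ≤ 1 := by
        rw [Real.exp_le_one_iff]
        nlinarith
      linarith
    · have := Real.add_one_le_exp (-(t * c))
      nlinarith [Real.exp_pos (-(t * c))]
  rw [← Set.Ioc_union_Ioi_eq_Ioi (le_of_lt one_pos)]
  apply IntegrableOn.union
  · -- on Ioc 0 1, dominate by c * t ^ (-p)
    have hmaj : IntegrableOn (fun t => c * t ^ (-p)) (Ioc (0:ℝ) 1) := by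
      have h := (intervalIntegral.intervalIntegrable_rpow' (a := 0) (b := 1)
        (show (-1:ℝ) < -p by linarith))
      rw [intervalIntegrable_iff_integrableOn_Ioc_of_le (le_of_lt one_pos)] at h
      exact h.const_mul c
    refine hmaj.integrable.mono (hmeas _ Set.Ioc_subset_Ioi_self measurableSet_Ioc) ?_
    filter_upwards [ae_restrict_mem measurableSet_Ioc] with t ht
    obtain ⟨h1, h2⟩ := hbound t ht.1
    have htpos : 0 < t := ht.1
    have hrp : (0:ℝ) ≤ t ^ (-p - 1) := Real.rpow_nonneg htpos.le _
    rw [Real.norm_eq_abs, Real.norm_eq_abs, abs_of_nonneg (mul_nonneg h1 hrp),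
      abs_of_nonneg (mul_nonneg hc.le (Real.rpow_nonneg htpos.le _))]
    have key : t ^ (-p) = t * t ^ (-p - 1) := by
      have h0 : t ^ (-p) = t ^ (1 + (-p - 1)) := by norm_num
      rw [h0, Real.rpow_add htpos, Real.rpow_one]
    calc (1 - Real.exp (-(t * c))) * t ^ (-p - 1) ≤ (t * c) * t ^ (-p - 1) := by
          exact mul_le_mul_of_nonneg_right h2 hrp
      _ = c * (t * t ^ (-p - 1)) := by ring
      _ = c * t ^ (-p) := by rw [key]
  · -- on Ioi 1, dominate by t ^ (-p - 1)
    have hmaj : IntegrableOn (fun t => t ^ (-p - 1)) (Ioi (1:ℝ)) :=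
      integrableOn_Ioi_rpow_of_lt (by linarith) one_pos
    refine hmaj.integrable.mono (hmeas _ (fun t ht => Set.mem_Ioi.mpr (lt_trans one_pos (Set.mem_Ioi.mp ht))) measurableSet_Ioi) ?_
    filter_upwards [ae_restrict_mem measurableSet_Ioi] with t ht
    have htpos : (0:ℝ) < t := lt_trans one_pos ht
    obtain ⟨h1, _⟩ := hbound t htpos
    have hexp : Real.exp (-(t * c)) > 0 := Real.exp_pos _
    have hrp : (0:ℝ) ≤ t ^ (-p - 1) := Real.rpow_nonneg htpos.le _
    rw [Real.norm_eq_abs, Real.norm_eq_abs, abs_of_nonneg (mul_nonneg h1 hrp),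
      abs_of_nonneg hrp]
    nlinarith

lemma bernstein_scale (hc0 : (0:ℝ) < 1) {c : ℝ} (hp : 0 < p) (hc : 0 < c) :
    ∫ t in Ioi (0:ℝ), (1 - Real.exp (-(t * c))) * t ^ (-p - 1)
      = c ^ p * ∫ t in Ioi (0:ℝ), (1 - Real.exp (-t)) * t ^ (-p - 1) := by
  set g : ℝ → ℝ := fun s => (1 - Real.exp (-s)) * s ^ (-p - 1) with hg
  have hcomp := MeasureTheory.integral_comp_mul_left_Ioi g 0 hc
  rw [mul_zero] at hcomp
  have hcc : c ^ (p + 1) * c ^ (-p - 1) = 1 := by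
    rw [← Real.rpow_add hc]
    norm_num
  have hpt : Set.EqOn (fun t => (1 - Real.exp (-(t * c))) * t ^ (-p - 1))
      (fun t => c ^ (p + 1) * g (c * t)) (Ioi (0:ℝ)) := by
    intro t ht
    have htpos : (0:ℝ) < t := ht
    simp only [hg]
    rw [show c * t = t * c by ring, Real.mul_rpow htpos.le hc.le]
    rw [show c ^ (p + 1) * ((1 - Real.exp (-(t * c))) * (t ^ (-p - 1) * c ^ (-p - 1)))
      = (c ^ (p + 1) * c ^ (-p - 1)) * ((1 - Real.exp (-(t * c))) * t ^ (-p - 1)) from by ring,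
      hcc, one_mul]
  rw [MeasureTheory.setIntegral_congr_fun measurableSet_Ioi hpt]
  rw [MeasureTheory.integral_const_mul, hcomp, smul_eq_mul, ← mul_assoc]
  congr 1
  rw [show c⁻¹ = c ^ (-1:ℝ) from (Real.rpow_neg_one c).symm, ← Real.rpow_add hc]
  norm_num

lemma bernstein_pos (hp0 : 0 < p) (hp1 : p < 1) :
    0 < ∫ t in Ioi (0:ℝ), (1 - Real.exp (-t)) * t ^ (-p - 1) := by
  have hint : IntegrableOn (fun t => (1 - Real.exp (-t)) * t ^ (-p - 1)) (Ioi (0:ℝ)) := by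
    have := bernstein_integrable hp0 hp1 one_pos
    simpa only [mul_one] using this
  have hae : 0 ≤ᵐ[volume.restrict (Ioi (0:ℝ))] fun t => (1 - Real.exp (-t)) * t ^ (-p - 1) := by
    filter_upwards [ae_restrict_mem measurableSet_Ioi] with t ht
    have htpos : (0:ℝ) < t := ht
    have h1 : Real.exp (-t) ≤ 1 := by
      rw [Real.exp_le_one_iff]
      linarith
    exact mul_nonneg (by linarith) (Real.rpow_nonneg htpos.le _)
  rw [MeasureTheory.setIntegral_pos_iff_support_of_nonneg_ae hae hint]
  have hsub : Ioi (0:ℝ) ⊆ Function.support fun t => (1 - Real.exp (-t)) * t ^ (-p - 1) := by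
    intro t ht
    have htpos : (0:ℝ) < t := ht
    have h1 : Real.exp (-t) < 1 := by
      rw [Real.exp_lt_one_iff]
      linarith
    have h2 : (0:ℝ) < t ^ (-p - 1) := Real.rpow_pos_of_pos htpos _
    exact ne_of_gt (mul_pos (by linarith) h2)
  rw [Set.inter_eq_self_of_subset_right hsub]
  rw [Real.volume_Ioi]
  exact ENNReal.zero_lt_top

/-- main analytic lemma : entrywise p-th power preserves CND for positive matrices -/
lemma cnd_rpow {M : Matrix (Fin n) (Fin n) ℝ} (hsym : ∀ i j, M i j = M j i)
    (hpos : ∀ i j, 0 < M i j) (hM : CND M) {p : ℝ} (hp0 : 0 ≤ p) (hp1 : p ≤ 1) :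
    CND (Matrix.of fun i j => M i j ^ p) := by
  rcases eq_or_lt_of_le hp0 with hp0' | hp0'
  · -- p = 0
    intro x hx
    unfold qf
    simp only [Matrix.of_apply, ← hp0', Real.rpow_zero, mul_one]
    rw [← Finset.sum_mul_sum, hx]
    simp
  rcases eq_or_lt_of_le hp1 with hp1' | hp1'
  · -- p = 1
    intro x hx
    have : qf (Matrix.of fun i j => M i j ^ p) x = qf M x := by
      unfold qf
      refine Finset.sum_congr rfl fun i _ => Finset.sum_congr rfl fun j _ => ?_
      rw [Matrix.of_apply, hp1', Real.rpow_one]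
    rw [this]
    exact hM x hx
  -- 0 < p < 1
  set J : ℝ := ∫ t in Ioi (0:ℝ), (1 - Real.exp (-t)) * t ^ (-p - 1) with hJ
  have hJpos : 0 < J := bernstein_pos hp0' hp1'
  intro x hx
  have qf2 : ∀ (N : Matrix (Fin n) (Fin n) ℝ) (y : Fin n → ℝ),
      qf N y = ∑ q : Fin n × Fin n, y q.1 * y q.2 * N q.1 q.2 := by
    intro N y; rw [qf, ← Fintype.sum_prod_type']
  rw [qf2]
  have key : ∀ i j : Fin n, (Matrix.of fun i j => M i j ^ p) i j
      = J⁻¹ * ∫ t in Ioi (0:ℝ), (1 - Real.exp (-(t * M i j))) * t ^ (-p - 1) := by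
    intro i j
    rw [Matrix.of_apply, bernstein_scale one_pos hp0' (hpos i j), ← hJ]
    field_simp
  simp_rw [key]
  have step1 : ∑ q : Fin n × Fin n, x q.1 * x q.2 *
      (J⁻¹ * ∫ t in Ioi (0:ℝ), (1 - Real.exp (-(t * M q.1 q.2))) * t ^ (-p - 1))
      = J⁻¹ * ∑ q : Fin n × Fin n,
          ∫ t in Ioi (0:ℝ), x q.1 * x q.2 * ((1 - Real.exp (-(t * M q.1 q.2))) * t ^ (-p - 1)) := by
    rw [Finset.mul_sum]
    refine Finset.sum_congr rfl fun q _ => ?_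
    rw [MeasureTheory.integral_const_mul]
    ring
  rw [step1]
  have step2 : ∑ q : Fin n × Fin n,
      ∫ t in Ioi (0:ℝ), x q.1 * x q.2 * ((1 - Real.exp (-(t * M q.1 q.2))) * t ^ (-p - 1))
      = ∫ t in Ioi (0:ℝ), ∑ q : Fin n × Fin n,
          x q.1 * x q.2 * ((1 - Real.exp (-(t * M q.1 q.2))) * t ^ (-p - 1)) := by
    rw [MeasureTheory.integral_finset_sum]
    intro q _
    exact ((bernstein_integrable hp0' hp1' (hpos q.1 q.2)).const_mul _)
  rw [step2]
  have step3 : ∫ t in Ioi (0:ℝ), ∑ q : Fin n × Fin n,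
      x q.1 * x q.2 * ((1 - Real.exp (-(t * M q.1 q.2))) * t ^ (-p - 1)) ≤ 0 := by
    apply MeasureTheory.setIntegral_nonpos measurableSet_Ioi
    intro t ht
    have htpos : (0:ℝ) < t := ht
    -- the matrix t • M is CND and symmetric, so entrywise exp(-(t*M)) is PSD
    set Mt : Matrix (Fin n) (Fin n) ℝ := Matrix.of fun i j => t * M i j with hMt
    have hsymt : ∀ i j, Mt i j = Mt j i := fun i j => by
      simp only [hMt, Matrix.of_apply, hsym i j]
    have hMtcnd : CND Mt := by
      intro y hy
      have : qf Mt y = t * qf M y := by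
        unfold qf
        rw [Finset.mul_sum]
        refine Finset.sum_congr rfl fun i _ => ?_
        rw [Finset.mul_sum]
        exact Finset.sum_congr rfl fun j _ => by simp only [hMt, Matrix.of_apply]; ring
      rw [this]
      exact mul_nonpos_of_nonneg_of_nonpos htpos.le (hM y hy)
    have hschoen := schoenberg hsymt hMtcnd x
    rw [qf2] at hschoen
    have expand : ∀ q : Fin n × Fin n,
        x q.1 * x q.2 * ((1 - Real.exp (-(t * M q.1 q.2))) * t ^ (-p - 1))
        = t ^ (-p - 1) * (x q.1 * x q.2
            - x q.1 * x q.2 * (Matrix.of fun i j => Real.exp (-Mt i j)) q.1 q.2) := by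
      intro q
      simp only [Matrix.of_apply, hMt]
      ring
    simp_rw [expand]
    rw [← Finset.mul_sum]
    apply mul_nonpos_of_nonneg_of_nonpos (Real.rpow_nonneg htpos.le _)
    rw [Finset.sum_sub_distrib]
    have hxx : ∑ q : Fin n × Fin n, x q.1 * x q.2 = 0 := by
      rw [Fintype.sum_prod_type, ← Finset.sum_mul_sum, hx, zero_mul]
    rw [hxx]
    simpa using hschoen
  calc J⁻¹ * ∫ t in Ioi (0:ℝ), ∑ q : Fin n × Fin n,
        x q.1 * x q.2 * ((1 - Real.exp (-(t * M q.1 q.2))) * t ^ (-p - 1))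
      ≤ J⁻¹ * 0 := by
        apply mul_le_mul_of_nonneg_left step3 (inv_nonneg.mpr hJpos.le)
    _ = 0 := mul_zero _

end analysis

end Stmt10aux

theorem stmt10 {n : ℕ} (A : Matrix (Fin n) (Fin n) ℝ)
    (hpos : ∀ i j, 0 < A i j) (hone : ExactlyOnePosEig A)
    (p : ℝ) (hp0 : 0 ≤ p) (hp1 : p ≤ 1) :
    ExactlyOnePosEig (Matrix.of fun i j => A i j ^ p) := by
  obtain ⟨hA, hcard⟩ := hone
  rcases Nat.eq_zero_or_pos n with hn | hn
  · exfalso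
    subst hn
    simp [Finset.univ_eq_empty] at hcard
  have hsym : ∀ i j, A i j = A j i := by
    intro i j
    have := congrFun (congrFun hA j) i
    simpa [Matrix.conjTranspose_apply] using this
  obtain ⟨v, lam, hlam, hv, hAv, hQv⟩ := Stmt10aux.perron hA hpos hn hcard
  set C : Matrix (Fin n) (Fin n) ℝ := Matrix.of fun i j => A i j / (v i * v j) with hC
  have hCsym : ∀ i j, C i j = C j i := by
    intro i j
    simp only [hC, Matrix.of_apply, hsym i j, mul_comm (v i) (v j)]
  have hCpos : ∀ i j, 0 < C i j := fun i j =>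
    div_pos (hpos i j) (mul_pos (hv i) (hv j))
  have hCcnd : Stmt10aux.CND C := by
    intro x hx
    have heq : Stmt10aux.qf C x = Stmt10aux.qf A (fun i => x i / v i) := by
      unfold Stmt10aux.qf
      refine Finset.sum_congr rfl fun i _ => Finset.sum_congr rfl fun j _ => ?_
      simp only [hC, Matrix.of_apply]
      have hvi := (hv i).ne'
      have hvj := (hv j).ne'
      field_simp
    rw [heq]
    apply hQv
    have : ∀ i, (x i / v i) * v i = x i := fun i => div_mul_cancel₀ (x i) (hv i).ne'
    simp_rw [this]
    exact hx
  have hCpcnd : Stmt10aux.CND (Matrix.of fun i j => C i j ^ p) := Stmt10aux.cnd_rpow hCsym hCpos hCcnd hp0 hp1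
  set B : Matrix (Fin n) (Fin n) ℝ := Matrix.of fun i j => A i j ^ p with hB
  have hBherm : B.IsHermitian := by
    ext i j
    simp only [Matrix.conjTranspose_apply, star_trivial, hB, Matrix.of_apply, hsym i j]
  refine ⟨hBherm, ?_⟩
  refine Stmt10aux.count_lemma hBherm hn (fun i => Real.rpow_pos_of_pos (hpos i i) p)
    (fun i => v i ^ p) ?_
  intro x hx
  have heq : Stmt10aux.qf B x = Stmt10aux.qf (Matrix.of fun i j => C i j ^ p) (fun i => x i * v i ^ p) := by
    unfold Stmt10aux.qf
    refine Finset.sum_congr rfl fun i _ => Finset.sum_congr rfl fun j _ => ?_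
    show x i * x j * (A i j ^ p) = (x i * v i ^ p) * (x j * v j ^ p) * (C i j ^ p)
    have hAij : A i j = C i j * (v i * v j) := by
      show A i j = A i j / (v i * v j) * (v i * v j)
      rw [div_mul_cancel₀ _ (mul_pos (hv i) (hv j)).ne']
    rw [hAij, Real.mul_rpow (hCpos i j).le (mul_pos (hv i) (hv j)).le,
      Real.mul_rpow (hv i).le (hv j).le]
    ring
  rw [heq]
  apply hCpcnd
  exact hx
end

section
/- A metric d on the finite set {1,…,n} admits an isometric embedding into some Euclidean space ℝᵐ if and only if the n×n matrix E with entries E_{ij} = d(i,j)² is conditionally negative semidefinite. -/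
open Matrix Finset

lemma sum_key' {n : ℕ} (w a : Fin n → ℝ) (f : Fin n → Fin n → ℝ)
    (hw : (∑ i, w i) = 0) :
    ∑ i, ∑ j, w i * w j * (a i + a j - 2 * f i j)
      = -2 * ∑ i, ∑ j, w i * w j * f i j := by
  have h1 : ∀ i j : Fin n, w i * w j * (a i + a j - 2 * f i j)
      = w i * a i * w j + w j * a j * w i - 2 * (w i * w j * f i j) := by
    intro i j; ring
  simp only [h1, Finset.sum_add_distrib, Finset.sum_sub_distrib, ← Finset.mul_sum,
    ← Finset.sum_mul, hw, mul_zero, zero_mul, Finset.sum_const_zero, zero_add, zero_sub]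
  ring

lemma quad_eq {n : ℕ} (w : Fin n → ℝ) (M : Fin n → Fin n → ℝ) :
    w ⬝ᵥ (Matrix.of M) *ᵥ w = ∑ i, ∑ j, w i * w j * M i j := by
  simp only [dotProduct, mulVec, Matrix.of_apply, Finset.mul_sum]
  congr 1; ext i; congr 1; ext j; ring

theorem stmt11 {n : ℕ} (d : Fin n → Fin n → ℝ)
    (hself : ∀ i, d i i = 0)
    (hsymm : ∀ i j, d i j = d j i)
    (hpos : ∀ i j, i ≠ j → 0 < d i j)
    (htri : ∀ i j k, d i k ≤ d i j + d j k) :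
    (∃ (m : ℕ) (φ : Fin n → EuclideanSpace ℝ (Fin m)),
        ∀ i j, d i j = dist (φ i) (φ j)) ↔
      ∀ w : Fin n → ℝ, (∑ i, w i) = 0 →
        w ⬝ᵥ (Matrix.of fun i j => d i j ^ 2).mulVec w ≤ 0 := by
  constructor
  · rintro ⟨m, φ, hφ⟩ w hw
    rw [quad_eq]
    have hd : ∀ i j, d i j ^ 2
        = ‖φ i‖ ^ 2 + ‖φ j‖ ^ 2 - 2 * (inner ℝ (φ i) (φ j) : ℝ) := by
      intro i j
      rw [hφ, dist_eq_norm, @norm_sub_sq_real]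
      ring
    simp only [hd]
    rw [sum_key' w (fun i => ‖φ i‖ ^ 2) (fun i j => (inner ℝ (φ i) (φ j) : ℝ)) hw]
    have hv : ∑ i, ∑ j, w i * w j * (inner ℝ (φ i) (φ j) : ℝ)
        = (inner ℝ (∑ i, w i • φ i) (∑ j, w j • φ j) : ℝ) := by
      rw [sum_inner]
      refine Finset.sum_congr rfl fun i _ => ?_
      rw [inner_sum]
      refine Finset.sum_congr rfl fun j _ => ?_
      rw [real_inner_smul_left, real_inner_smul_right]; ring
    rw [hv]
    have := real_inner_self_nonneg (x := ∑ i, w i • φ i)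
    linarith
  · intro H
    rcases Nat.eq_zero_or_pos n with hn | hn
    · subst hn
      exact ⟨0, fun i => 0, fun i => i.elim0⟩
    have hdnn : ∀ i j, 0 ≤ d i j := by
      intro i j
      rcases eq_or_ne i j with h | h
      · rw [h, hself]
      · exact (hpos i j h).le
    set i0 : Fin n := ⟨0, hn⟩ with hi0
    set a : Fin n → ℝ := fun i => d i i0 ^ 2 with ha
    set G : Matrix (Fin n) (Fin n) ℝ :=
      Matrix.of (fun i j => (a i + a j - d i j ^ 2) / 2) with hG
    have hG0 : ∀ j, G i0 j = 0 := by
      intro j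
      simp only [hG, Matrix.of_apply, ha, hself, hsymm i0 j]
      ring
    have hG0' : ∀ j, G j i0 = 0 := by
      intro j
      simp only [hG, Matrix.of_apply, ha, hself, hsymm j i0]
      ring
    have hdG : ∀ i j, d i j ^ 2 = a i + a j - 2 * G i j := by
      intro i j; simp only [hG, Matrix.of_apply]; ring
    have hPSD : G.PosSemidef := by
      refine posSemidef_iff_dotProduct_mulVec.mpr ⟨?_, ?_⟩
      · ext i j
        simp only [hG, Matrix.conjTranspose_apply, Matrix.of_apply, star_trivial]
        rw [hsymm j i]; ring
      · intro x
        have hstar : star x = x := by simp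
        rw [hstar, quad_eq x (fun i j => (a i + a j - d i j ^ 2) / 2)]
        set w : Fin n → ℝ := fun j => x j - (if j = i0 then ∑ k, x k else 0) with hwdef
        have hw : ∑ j, w j = 0 := by
          simp [hwdef, Finset.sum_sub_distrib]
        have hE := H w hw
        rw [quad_eq] at hE
        simp only [hdG] at hE
        rw [sum_key' w a (fun i j => G i j) hw] at hE
        have hGww : 0 ≤ ∑ i, ∑ j, w i * w j * G i j := by linarith
        have hpt : ∀ i j, w i * w j * G i j = x i * x j * G i j := by
          intro i j
          rcases eq_or_ne i i0 with hi | hi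
          · rw [hi, hG0]; ring
          rcases eq_or_ne j i0 with hj | hj
          · rw [hj, hG0']; ring
          simp [hwdef, hi, hj]
        calc (0:ℝ) ≤ ∑ i, ∑ j, w i * w j * G i j := hGww
          _ = ∑ i, ∑ j, x i * x j * G i j := by
              congr 1; ext i; congr 1; ext j; exact hpt i j
          _ = ∑ i, ∑ j, x i * x j * ((a i + a j - d i j ^ 2) / 2) := rfl
    obtain ⟨B, hB⟩ : ∃ B : Matrix (Fin n) (Fin n) ℝ, G = Bᵀ * B := by
      open MatrixOrder in
      refine ⟨CFC.sqrt G, ?_⟩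
      open MatrixOrder in
      have h0 : 0 ≤ G := hPSD.nonneg
      open MatrixOrder in
      have h1 := (CFC.sqrt_nonneg G).isSelfAdjoint
      rw [← conjTranspose_eq_transpose_of_trivial, ← star_eq_conjTranspose, h1.star_eq]
      open MatrixOrder in
      exact (CFC.sqrt_mul_sqrt_self G h0).symm
    refine ⟨n, fun i => (WithLp.equiv 2 _).symm (fun k => B k i), fun i j => ?_⟩
    have hGB : ∀ i j, G i j = ∑ k, B k i * B k j := by
      intro i j
      rw [hB]; simp [Matrix.mul_apply]
    have hsum : ∑ k, (B k i - B k j) ^ 2 = d i j ^ 2 := by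
      have h1 : ∑ k, (B k i - B k j) ^ 2
          = (∑ k, B k i * B k i) + (∑ k, B k j * B k j) - 2 * ∑ k, B k i * B k j := by
        rw [← Finset.sum_add_distrib, Finset.mul_sum, ← Finset.sum_sub_distrib]
        congr 1; ext k; ring
      rw [h1, ← hGB, ← hGB, ← hGB]
      have hGii : G i i = a i := by
        simp only [hG, Matrix.of_apply, hself]; ring
      have hGjj : G j j = a j := by
        simp only [hG, Matrix.of_apply, hself]; ring
      rw [hGii, hGjj]
      simp only [hG, Matrix.of_apply]; ring
    rw [EuclideanSpace.dist_eq]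
    simp only [WithLp.equiv_symm_apply, WithLp.ofLp_toLp, Real.dist_eq, sq_abs]
    rw [hsum, Real.sqrt_sq (hdnn i j)]
end

section
/- Let Mₙ be the n×n matrix (n ≥ 2) with 2 on the diagonal, 1 on the super- and sub-diagonal and in the corners (1,n) and (n,1), and 0 elsewhere (the circulant tridiagonal matrix). Then Mₙ − (2/n)Jₙ is positive semidefinite, where Jₙ is the all-ones matrix. -/
open Matrix Finset

/-- The circulant tridiagonal matrix with `2` on the diagonal and `1` on the
cyclically adjacent positions. -/
def cycM (n : ℕ) : Matrix (Fin n) (Fin n) ℝ :=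
  Matrix.of fun i j =>
    if i = j then 2
    else if (i.val + 1) % n = j.val ∨ (j.val + 1) % n = i.val then 1
    else 0

lemma cycM_symm (n : ℕ) : (cycM n).IsHermitian := by
  ext i j
  simp only [cycM, conjTranspose_apply, of_apply, star_trivial]
  rcases eq_or_ne i j with rfl | h
  · simp
  · rw [if_neg h, if_neg (Ne.symm h)]
    by_cases hc : (j.val + 1) % n = i.val ∨ (i.val + 1) % n = j.val
    · rw [if_pos hc, if_pos (Or.symm hc)]
    · rw [if_neg hc, if_neg (fun h' => hc (Or.symm h'))]

lemma fin_succ_iff (m : ℕ) (i j : Fin (m+3)) : (i.val + 1) % (m+3) = j.val ↔ j = i + 1 := by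
  rw [Fin.ext_iff, Fin.add_def, eq_comm]
  norm_num

lemma cycM_entry (m : ℕ) (i j : Fin (m+3)) :
    cycM (m+3) i j = (if j = i then 2 else 0) + (if j = i + 1 then 1 else 0)
      + (if j = i - 1 then 1 else 0) := by
  have e1 : (i.val + 1) % (m+3) = j.val ↔ j = i + 1 := fin_succ_iff m i j
  have e2 : (j.val + 1) % (m+3) = i.val ↔ j = i - 1 := by
    rw [fin_succ_iff m j i, eq_sub_iff_add_eq, eq_comm]
  have d1 : (i + 1 : Fin (m+3)) ≠ i := by
    rw [Ne, add_eq_left]; exact one_ne_zero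
  have d2 : (i - 1 : Fin (m+3)) ≠ i := by
    rw [Ne, sub_eq_self]; exact one_ne_zero
  have d3 : (i + 1 : Fin (m+3)) ≠ i - 1 := by
    intro h
    have h2 : i + 2 = i := by
      have := congrArg (· + 1) h
      simp only [sub_add_cancel] at this
      rw [add_assoc] at this
      convert this using 2
      simp [Fin.ext_iff, Fin.val_add]
    rw [add_eq_left] at h2
    have := congrArg Fin.val h2
    simp [Fin.val_two] at this
    rw [Nat.mod_eq_of_lt (by omega)] at this
    exact absurd this (by norm_num)
  simp only [cycM, of_apply, e1, e2]
  rcases eq_or_ne j i with rfl | h0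
  · rw [if_pos rfl, if_pos rfl, if_neg d1.symm, if_neg d2.symm]; norm_num
  rcases eq_or_ne j (i + 1) with rfl | h1
  · rw [if_neg d1.symm, if_pos (Or.inl rfl), if_neg d1, if_pos rfl, if_neg d3]; norm_num
  rcases eq_or_ne j (i - 1) with rfl | h2
  · rw [if_neg d2.symm, if_pos (Or.inr rfl), if_neg d2, if_neg d3.symm, if_pos rfl]; norm_num
  · rw [if_neg (fun h => h0 h.symm), if_neg (by tauto : ¬(j = i + 1 ∨ j = i - 1)),
      if_neg h0, if_neg h1, if_neg h2]
    norm_num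

lemma cycM_mulVec (m : ℕ) (x : Fin (m+3) → ℝ) (i : Fin (m+3)) :
    (cycM (m+3) *ᵥ x) i = 2 * x i + x (i + 1) + x (i - 1) := by
  simp only [mulVec, dotProduct, cycM_entry, add_mul, Finset.sum_add_distrib,
    ite_mul, zero_mul, one_mul]
  rw [Finset.sum_ite_eq', Finset.sum_ite_eq', Finset.sum_ite_eq']
  simp [two_mul]

lemma reidx (m : ℕ) (f : Fin (m+3) → ℝ) : ∑ i, f (i + 1) = ∑ i, f i :=
  Fintype.sum_equiv (Equiv.addRight 1) _ _ (fun _ => rfl)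

lemma quad_eq_s13 (m : ℕ) (x : Fin (m+3) → ℝ) :
    ∑ i, x i * (cycM (m+3) *ᵥ x) i = ∑ i, (x i + x (i + 1))^2 := by
  have A : ∑ i, (x i + x (i + 1))^2
      = ∑ i, (x i)^2 + ∑ i, 2*(x i * x (i + 1)) + ∑ i, (x (i + 1))^2 := by
    rw [← Finset.sum_add_distrib, ← Finset.sum_add_distrib]
    exact Finset.sum_congr rfl (fun i _ => by ring)
  have B : ∑ i, (x (i + 1))^2 = ∑ i, (x i)^2 := reidx m (fun i => (x i)^2)
  have C : ∑ i, x i * (cycM (m+3) *ᵥ x) i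
      = ∑ i, 2*(x i)^2 + ∑ i, x i * x (i + 1) + ∑ i, x i * x (i - 1) := by
    simp only [cycM_mulVec]
    rw [← Finset.sum_add_distrib, ← Finset.sum_add_distrib]
    exact Finset.sum_congr rfl (fun i _ => by ring)
  have D : ∑ i, x i * x (i - 1) = ∑ i, x i * x (i + 1) := by
    rw [← reidx m (fun i => x i * x (i - 1))]
    exact Finset.sum_congr rfl (fun i _ => by rw [add_sub_cancel_right]; ring)
  rw [C, D, A, B]
  have F : ∑ i, 2*(x i * x (i + 1)) = 2*∑ i, (x i * x (i + 1)) := by rw [Finset.mul_sum]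
  have E : ∑ i, 2*(x i)^2 = 2*∑ i, (x i)^2 := by rw [Finset.mul_sum]
  rw [F, E]
  ring

theorem stmt13 {n : ℕ} (hn : 2 ≤ n) :
    (cycM n - (2 / (n : ℝ)) • (Matrix.of fun _ _ => (1 : ℝ))).PosSemidef := by
  have hJ : ∀ (x : Fin n → ℝ) (i : Fin n),
      (((2 / (n : ℝ)) • (Matrix.of fun _ _ => (1:ℝ)) : Matrix (Fin n) (Fin n) ℝ) *ᵥ x) i
        = (2 / (n:ℝ)) * ∑ j, x j := by
    intro x i
    simp [mulVec, dotProduct, Finset.mul_sum]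
  rw [posSemidef_iff_dotProduct_mulVec]
  constructor
  · have : ((2 / (n : ℝ)) • (Matrix.of fun _ _ => (1 : ℝ)) :
        Matrix (Fin n) (Fin n) ℝ).IsHermitian := by
      ext i j; simp
    exact (cycM_symm n).sub this
  intro x
  have hx : star x = x := by simp
  rw [hx, sub_mulVec, dotProduct_sub]
  rcases eq_or_ne n 2 with rfl | hne
  ·
    have hM : cycM 2 = Matrix.of ![![2,1],![1,2]] := by
      ext i j; fin_cases i <;> fin_cases j <;> simp [cycM]
    rw [hM]
    simp only [dotProduct, mulVec, Fin.sum_univ_two, hJ]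
    norm_num [mulVec, dotProduct, Fin.sum_univ_two]
    nlinarith [sq_nonneg (x 0), sq_nonneg (x 1), sq_nonneg (x 0 + x 1)]
  · obtain ⟨m, rfl⟩ : ∃ m, n = m + 3 := ⟨n - 3, by omega⟩
    simp only [dotProduct, hJ]
    rw [quad_eq_s13]
    have hcs := sq_sum_le_card_mul_sum_sq (s := (Finset.univ : Finset (Fin (m+3))))
      (f := fun i => x i + x (i + 1))
    have r : ∑ i : Fin (m+3), x (i + 1) = ∑ i, x i := reidx m x
    have hsum : ∑ i : Fin (m+3), (x i + x (i + 1)) = 2 * ∑ i, x i := by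
      rw [Finset.sum_add_distrib, r]; ring
    rw [hsum] at hcs
    simp only [Finset.card_univ, Fintype.card_fin] at hcs
    have hn0 : (0:ℝ) < ((m+3 : ℕ) : ℝ) := by positivity
    have hS : (0:ℝ) ≤ (∑ i, x i)^2 := sq_nonneg _
    have hpull : ∑ i : Fin (m+3), x i * ((2 / ((m+3:ℕ):ℝ)) * ∑ j, x j)
        = (2 / ((m+3:ℕ):ℝ)) * (∑ i, x i)^2 := by
      rw [← Finset.sum_mul]; ring
    rw [hpull, sub_nonneg, div_mul_eq_mul_div, div_le_iff₀ hn0]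
    push_cast at hcs ⊢
    nlinarith [hcs, hS]
end

section
/- If B is an n×n doubly sub-stochastic matrix (nonnegative entries, all row sums ≤ 1, all column sums ≤ 1), then the symmetric matrix 2Iₙ + B + Bᵀ − (2/n)Jₙ is positive semidefinite. -/
open Matrix Finset

lemma wcs {ι : Type*} [Fintype ι] (w v : ι → ℝ) (hw : ∀ i, 0 ≤ w i) :
    (∑ i, w i * v i) ^ 2 ≤ (∑ i, w i) * ∑ i, w i * v i ^ 2 := by
  have h := Finset.sum_mul_sq_le_sq_mul_sq Finset.univ
    (fun i => Real.sqrt (w i)) (fun i => Real.sqrt (w i) * v i)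
  have e1 : ∀ i, Real.sqrt (w i) * (Real.sqrt (w i) * v i) = w i * v i := by
    intro i; rw [← mul_assoc, Real.mul_self_sqrt (hw i)]
  have e2 : ∀ i, Real.sqrt (w i) ^ 2 = w i := fun i => Real.sq_sqrt (hw i)
  have e3 : ∀ i, (Real.sqrt (w i) * v i) ^ 2 = w i * v i ^ 2 := by
    intro i; rw [mul_pow, e2]
  simpa only [e1, e2, e3] using h

theorem stmt14 {n : ℕ} (B : Matrix (Fin n) (Fin n) ℝ)
    (hnn : ∀ i j, 0 ≤ B i j)
    (hrow : ∀ i, ∑ j, B i j ≤ 1)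
    (hcol : ∀ j, ∑ i, B i j ≤ 1) :
    ((2 : ℝ) • (1 : Matrix (Fin n) (Fin n) ℝ) + B + Bᵀ -
        (2 / (n : ℝ)) • (Matrix.of fun _ _ => (1 : ℝ))).PosSemidef := by
  rw [Matrix.posSemidef_iff_dotProduct_mulVec]
  constructor
  · unfold Matrix.IsHermitian
    ext i j
    simp [Matrix.conjTranspose_apply, Matrix.sub_apply, Matrix.add_apply, Matrix.smul_apply,
      Matrix.one_apply, Matrix.transpose_apply, Matrix.of_apply, eq_comm]
    ring
  intro x
  simp only [star_trivial]
  set s : ℝ := ∑ i, x i with hs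
  set T : ℝ := ∑ i, ∑ j, B i j * (x i * x j) with hT
  -- expand the quadratic form
  have hq : x ⬝ᵥ (((2 : ℝ) • (1 : Matrix (Fin n) (Fin n) ℝ) + B + Bᵀ -
        (2 / (n : ℝ)) • (Matrix.of fun _ _ => (1 : ℝ))) *ᵥ x)
      = 2 * ∑ i, x i ^ 2 + 2 * T - (2 / (n : ℝ)) * s ^ 2 := by
    simp only [dotProduct, mulVec, Matrix.sub_apply, Matrix.add_apply, Matrix.smul_apply,
      Matrix.one_apply, Matrix.transpose_apply, Matrix.of_apply, smul_eq_mul, mul_one]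
    have step1 : ∀ i : Fin n,
        (∑ j, (2 * (if i = j then (1:ℝ) else 0) + B i j + B j i - 2 / n) * x j)
        = 2 * x i + ∑ j, B i j * x j + ∑ j, B j i * x j - (2/n) * ∑ j, x j := by
      intro i
      rw [show (fun j => (2 * (if i = j then (1:ℝ) else 0) + B i j + B j i - 2 / n) * x j)
          = fun j => (2 * (if i = j then (1:ℝ) else 0) * x j + B i j * x j + B j i * x j
            - (2/n) * x j) from funext fun j => by ring]
      rw [Finset.sum_sub_distrib, Finset.sum_add_distrib, Finset.sum_add_distrib,
        ← Finset.mul_sum]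
      congr 1
      congr 2
      simp [mul_ite, Finset.sum_ite_eq]
    simp only [step1]
    have step2 : ∀ i : Fin n, x i * (2 * x i + ∑ j, B i j * x j + ∑ j, B j i * x j
          - (2/n) * ∑ j, x j)
        = 2 * x i ^ 2 + ∑ j, B i j * (x i * x j) + ∑ j, B j i * (x i * x j)
          - (2/n) * (x i * ∑ j, x j) := by
      intro i
      have h1 : ∑ j, B i j * (x i * x j) = x i * ∑ j, B i j * x j := by
        rw [Finset.mul_sum]; exact Finset.sum_congr rfl fun j _ => by ring
      have h2 : ∑ j, B j i * (x i * x j) = x i * ∑ j, B j i * x j := by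
        rw [Finset.mul_sum]; exact Finset.sum_congr rfl fun j _ => by ring
      rw [h1, h2]; ring
    rw [Finset.sum_congr rfl fun i _ => step2 i]
    rw [Finset.sum_sub_distrib, Finset.sum_add_distrib, Finset.sum_add_distrib,
      ← Finset.mul_sum, ← Finset.mul_sum, ← Finset.sum_mul]
    have hswap : ∑ i, ∑ j, B j i * (x i * x j) = T := by
      rw [hT, Finset.sum_comm]
      exact Finset.sum_congr rfl fun i _ => Finset.sum_congr rfl fun j _ => by ring
    rw [hswap, hT, hs]
    ring
  rw [hq]
  -- trivial case n = 0
  rcases Nat.eq_zero_or_pos n with hn | hn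
  · subst hn
    simp [hs, hT]
  have hn' : (0:ℝ) < n := by exact_mod_cast hn
  have hS0 : 0 ≤ ∑ i, ∑ j, B i j :=
    Finset.sum_nonneg fun i _ => Finset.sum_nonneg fun j _ => hnn i j
  have hwnn : ∀ k : (Fin n × Fin n) ⊕ (Fin n ⊕ Fin n),
      0 ≤ Sum.elim (fun p => B p.1 p.2)
        (Sum.elim (fun i => 1 - ∑ j, B i j) (fun j => 1 - ∑ i, B i j)) k := by
    rintro (⟨i, j⟩ | (i | j)) <;> simp only [Sum.elim_inl, Sum.elim_inr]
    · exact hnn i j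
    · linarith [hrow i]
    · linarith [hcol j]
  have key := wcs (Sum.elim (fun p : Fin n × Fin n => B p.1 p.2)
      (Sum.elim (fun i => 1 - ∑ j, B i j) (fun j => 1 - ∑ i, B i j)))
    (Sum.elim (fun p : Fin n × Fin n => x p.1 + x p.2) (Sum.elim x x)) hwnn
  simp only [Fintype.sum_sum_type, Fintype.sum_prod_type, Sum.elim_inl, Sum.elim_inr] at key
  -- the sum of weights
  have e1 : ∑ i : Fin n, (1 - ∑ j, B i j) = n - ∑ i, ∑ j, B i j := by
    rw [Finset.sum_sub_distrib, Finset.sum_const, Finset.card_univ, Fintype.card_fin,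
      nsmul_eq_mul, mul_one]
  have e2 : ∑ j : Fin n, (1 - ∑ i, B i j) = n - ∑ i, ∑ j, B i j := by
    rw [Finset.sum_sub_distrib, Finset.sum_const, Finset.card_univ, Fintype.card_fin,
      nsmul_eq_mul, mul_one, Finset.sum_comm]
  -- the weighted sum of values
  have hA : (∑ i, ∑ j, B i j * (x i + x j))
      + ((∑ i : Fin n, (1 - ∑ j, B i j) * x i) + (∑ j : Fin n, (1 - ∑ i, B i j) * x j))
      = 2 * s := by
    have h1 : ∑ i, ∑ j, B i j * (x i + x j)
        = (∑ i, (∑ j, B i j) * x i) + ∑ j, (∑ i, B i j) * x j := by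
      have inner : ∀ i : Fin n, ∑ j, B i j * (x i + x j)
          = (∑ j, B i j) * x i + ∑ j, B i j * x j := by
        intro i
        rw [Finset.sum_mul,
          show (fun j => B i j * (x i + x j)) = fun j => B i j * x i + B i j * x j from
            funext fun j => by ring, Finset.sum_add_distrib]
      rw [Finset.sum_congr rfl fun i _ => inner i, Finset.sum_add_distrib]
      congr 1
      rw [Finset.sum_comm]
      exact Finset.sum_congr rfl fun j _ => (Finset.sum_mul ..).symm
    have h2 : ∑ i : Fin n, (1 - ∑ j, B i j) * x i = s - ∑ i, (∑ j, B i j) * x i := by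
      rw [show (fun i => (1 - ∑ j, B i j) * x i) = fun i => x i - (∑ j, B i j) * x i from
        funext fun i => by ring, Finset.sum_sub_distrib]
    have h3 : ∑ j : Fin n, (1 - ∑ i, B i j) * x j = s - ∑ j, (∑ i, B i j) * x j := by
      rw [show (fun j => (1 - ∑ i, B i j) * x j) = fun j => x j - (∑ i, B i j) * x j from
        funext fun j => by ring, Finset.sum_sub_distrib]
    rw [h1, h2, h3]; ring
  -- the weighted sum of squares
  have hQ : (∑ i, ∑ j, B i j * (x i + x j) ^ 2)
      + ((∑ i : Fin n, (1 - ∑ j, B i j) * x i ^ 2) + (∑ j : Fin n, (1 - ∑ i, B i j) * x j ^ 2))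
      = 2 * ∑ i, x i ^ 2 + 2 * T := by
    have h1 : ∑ i, ∑ j, B i j * (x i + x j) ^ 2
        = (∑ i, (∑ j, B i j) * x i ^ 2) + (∑ j, (∑ i, B i j) * x j ^ 2) + 2 * T := by
      have inner : ∀ i : Fin n, ∑ j, B i j * (x i + x j) ^ 2
          = (∑ j, B i j) * x i ^ 2 + ∑ j, B i j * x j ^ 2
            + 2 * ∑ j, B i j * (x i * x j) := by
        intro i
        rw [Finset.sum_mul, Finset.mul_sum,
          show (fun j => B i j * (x i + x j) ^ 2) = fun j =>
            B i j * x i ^ 2 + B i j * x j ^ 2 + 2 * (B i j * (x i * x j)) from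
            funext fun j => by ring, Finset.sum_add_distrib, Finset.sum_add_distrib]
      rw [Finset.sum_congr rfl fun i _ => inner i, Finset.sum_add_distrib,
        Finset.sum_add_distrib, hT, ← Finset.mul_sum]
      congr 2
      rw [Finset.sum_comm]
      exact Finset.sum_congr rfl fun j _ => (Finset.sum_mul ..).symm
    have h2 : ∑ i : Fin n, (1 - ∑ j, B i j) * x i ^ 2
        = (∑ i, x i ^ 2) - ∑ i, (∑ j, B i j) * x i ^ 2 := by
      rw [show (fun i => (1 - ∑ j, B i j) * x i ^ 2)
          = fun i => x i ^ 2 - (∑ j, B i j) * x i ^ 2 from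
        funext fun i => by ring, Finset.sum_sub_distrib]
    have h3 : ∑ j : Fin n, (1 - ∑ i, B i j) * x j ^ 2
        = (∑ j, x j ^ 2) - ∑ j, (∑ i, B i j) * x j ^ 2 := by
      rw [show (fun j => (1 - ∑ i, B i j) * x j ^ 2)
          = fun j => x j ^ 2 - (∑ i, B i j) * x j ^ 2 from
        funext fun j => by ring, Finset.sum_sub_distrib]
    rw [h1, h2, h3]; ring
  have hQnn : (0:ℝ) ≤ 2 * ∑ i, x i ^ 2 + 2 * T := by
    rw [← hQ]
    refine add_nonneg (Finset.sum_nonneg fun i _ => Finset.sum_nonneg fun j _ =>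
      mul_nonneg (hnn i j) (sq_nonneg _)) (add_nonneg ?_ ?_)
    · exact Finset.sum_nonneg fun i _ => mul_nonneg (by linarith [hrow i]) (sq_nonneg _)
    · exact Finset.sum_nonneg fun j _ => mul_nonneg (by linarith [hcol j]) (sq_nonneg _)
  rw [hA, hQ, e1, e2] at key
  have hfin : (2 / (n:ℝ)) * s ^ 2 ≤ 2 * ∑ i, x i ^ 2 + 2 * T := by
    rw [div_mul_eq_mul_div, div_le_iff₀ hn']
    nlinarith [key, hS0, hQnn]
  linarith
end
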